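/- arXiv:1506.03249 — 10 statements merged into one kernel-verified Lean document; each statement's English description precedes it below -/
import Mathlib

section
/- For an RG-word w = w_1⋯w_n of a set partition of {1,…,n} into k blocks (written in standard form), the weight wt(w) = ∏_{i=2}^n wt_i(w), where wt_i(w) = q^{w_i−1} if max(w_1,…,w_{i−1}) ≥ w_i and wt_i(w) = 1 otherwise, satisfies wt(w) = q^{(Σ_{i=1}^n w_i) − n − C(k,2)}. -/
open scoped Classical
open Polynomial

/-- The prefix maximum `max(w_1, …, w_{i-1})` (equal to `0` when `i` is the first index). -/
def pmax {n k : ℕ} (w : Fin n → Fin (k + 1)) (i : Fin n) : ℕ :=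
  (Finset.univ.filter fun j => j < i).sup fun j => (w j : ℕ)

/-- `w` is a restricted growth word of length `n` with maximum letter `k`. -/
def IsRG {n k : ℕ} (w : Fin n → Fin (k + 1)) : Prop :=
  (∀ i, 1 ≤ (w i : ℕ)) ∧ (∀ i, (w i : ℕ) ≤ pmax w i + 1) ∧
    (Finset.univ.sup fun i => (w i : ℕ)) = k

/-- The weight `wt(w) = ∏ᵢ wtᵢ(w)` where `wtᵢ(w) = q^{wᵢ-1}` if `max(w₁,…,w_{i-1}) ≥ wᵢ`
and `1` otherwise; here `q = X` in `ℤ[X]`. -/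
noncomputable def wt {n k : ℕ} (w : Fin n → Fin (k + 1)) : Polynomial ℤ :=
  ∏ i : Fin n, if (w i : ℕ) ≤ pmax w i then X ^ ((w i : ℕ) - 1) else 1

open Finset in
lemma keyN (u : ℕ → ℕ) : ∀ n : ℕ, (∀ i < n, 1 ≤ u i) →
    (∀ i < n, u i ≤ (range i).sup u + 1) →
    (∑ i ∈ (range n).filter (fun i => u i ≤ (range i).sup u), (u i - 1)) + n
      + ((range n).sup u).choose 2 = ∑ i ∈ range n, u i := by
  intro n
  induction n with
  | zero => simp
  | succ n ih =>
    intro h1 h2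
    have ih' := ih (fun i hi => h1 i (by omega)) (fun i hi => h2 i (by omega))
    have hx := h2 n (by omega)
    have hx1 := h1 n (by omega)
    have hnotmem : n ∉ range n := by simp
    rw [Finset.range_add_one, Finset.filter_insert, Finset.sup_insert, Finset.sum_insert hnotmem]
    by_cases hc : u n ≤ (range n).sup u
    · rw [if_pos hc, Finset.sum_insert (by simp)]
      have h : u n ⊔ (range n).sup u = (range n).sup u := sup_eq_right.mpr hc
      rw [h]
      omega
    · rw [if_neg hc]
      have hxe : u n = (range n).sup u + 1 := by omega
      have h : u n ⊔ (range n).sup u = (range n).sup u + 1 := by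
        rw [hxe]; exact sup_eq_left.mpr (by omega)
      rw [h]
      have hch : ((range n).sup u + 1).choose 2 =
          (range n).sup u + ((range n).sup u).choose 2 := by
        show ((range n).sup u).succ.choose (Nat.succ 1) = _
        rw [Nat.choose_succ_succ, Nat.choose_one_right]
      omega

theorem wt_eq_q_pow (n k : ℕ) (w : Fin n → Fin (k + 1)) (hw : IsRG w) :
    wt w = X ^ ((∑ i, (w i : ℕ)) - n - k.choose 2) := by
  classical
  set u : ℕ → ℕ := fun i => if h : i < n then (w ⟨i, h⟩ : ℕ) else 0 with hu
  have hui : ∀ i : Fin n, u i.val = (w i : ℕ) := fun i => by simp [hu, i.isLt]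
  have hpmax : ∀ i : Fin n, pmax w i = (Finset.range i.val).sup u := by
    intro i
    apply le_antisymm
    · apply Finset.sup_le
      intro j hj
      simp only [Finset.mem_filter, Finset.mem_univ, true_and] at hj
      have : (j : ℕ) ∈ Finset.range i.val := Finset.mem_range.mpr hj
      calc (w j : ℕ) = u j.val := (hui j).symm
        _ ≤ _ := Finset.le_sup this
    · apply Finset.sup_le
      intro m hm
      have hmi : m < i.val := Finset.mem_range.mp hm
      have hmn : m < n := lt_trans hmi i.isLt
      have : u m = (w ⟨m, hmn⟩ : ℕ) := by simp [hu, hmn]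
      rw [this]
      refine Finset.le_sup (f := fun j => (w j : ℕ)) ?_
      simp only [Finset.mem_filter, Finset.mem_univ, true_and]
      exact hmi
  have hsup : (Finset.univ.sup fun i => (w i : ℕ)) = (Finset.range n).sup u := by
    apply le_antisymm
    · apply Finset.sup_le
      intro i _
      calc (w i : ℕ) = u i.val := (hui i).symm
        _ ≤ _ := Finset.le_sup (Finset.mem_range.mpr i.isLt)
    · apply Finset.sup_le
      intro m hm
      have hmn : m < n := Finset.mem_range.mp hm
      have : u m = (w ⟨m, hmn⟩ : ℕ) := by simp [hu, hmn]
      rw [this]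
      exact Finset.le_sup (f := fun i => ((w i : ℕ))) (Finset.mem_univ _)
  obtain ⟨h1, h2, h3⟩ := hw
  have key := keyN u n
    (fun i hi => by
      have := h1 ⟨i, hi⟩; simpa [hu, hi] using this)
    (fun i hi => by
      have := h2 ⟨i, hi⟩
      rw [hpmax ⟨i, hi⟩] at this
      simpa [hu, hi] using this)
  -- rewrite wt as a single power of X
  have hwt : wt w = X ^ (∑ i ∈ (Finset.range n).filter
      (fun i => u i ≤ (Finset.range i).sup u), (u i - 1)) := by
    rw [wt]
    have step1 : (∏ i : Fin n, if (w i : ℕ) ≤ pmax w i then (X : Polynomial ℤ) ^ ((w i : ℕ) - 1) else 1)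
        = ∏ i : Fin n, (X : Polynomial ℤ) ^ (if u i.val ≤ (Finset.range i.val).sup u then u i.val - 1 else 0) := by
      apply Finset.prod_congr rfl
      intro i _
      rw [hpmax i, hui i]
      split <;> simp
    rw [step1, Finset.prod_pow_eq_pow_sum]
    congr 1
    rw [Fin.sum_univ_eq_sum_range (fun i => if u i ≤ (Finset.range i).sup u then u i - 1 else 0) n]
    rw [Finset.sum_filter]
  have hsum : (∑ i, (w i : ℕ)) = ∑ i ∈ Finset.range n, u i := by
    rw [← Fin.sum_univ_eq_sum_range u n]
    exact Finset.sum_congr rfl fun i _ => (hui i).symm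
  rw [hwt]
  congr 1
  rw [hsum, ← h3, hsup]
  omega
end

section
/- The q-Stirling number of the second kind S_q[n,k] equals the sum of wt(w) over all RG-words w of length n with maximum letter k, where wt(w) = ∏_{i=2}^n wt_i(w) with wt_i(w) = q^{w_i−1} if max(w_1,…,w_{i−1}) ≥ w_i and 1 otherwise. -/
open scoped Classical
open Polynomial

/-- The set of RG-words of length `n` with maximum letter `k`. -/
noncomputable def RG (n k : ℕ) : Finset (Fin n → Fin (k + 1)) :=
  Finset.univ.filter IsRG

/-- The `q`-Stirling numbers of the second kind:
`S_q[n,k] = S_q[n-1,k-1] + [k]_q ⬝ S_q[n-1,k]`, `S_q[n,0] = δ_{n,0}`, `S_q[0,k] = δ_{0,k}`. -/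
noncomputable def qS : ℕ → ℕ → Polynomial ℤ
  | 0, 0 => 1
  | 0, _ + 1 => 0
  | _ + 1, 0 => 0
  | n + 1, k + 1 => qS n k + (∑ i ∈ Finset.range (k + 1), X ^ i) * qS n (k + 1)

/-! ### Auxiliary lemmas -/

/-- The maximum letter of a word. -/
def wmax {n k : ℕ} (w : Fin n → Fin (k + 1)) : ℕ :=
  Finset.univ.sup fun i => (w i : ℕ)

lemma pmax_congr {n k k' : ℕ} {w : Fin n → Fin (k + 1)} {w' : Fin n → Fin (k' + 1)}
    (h : ∀ j, (w j : ℕ) = (w' j : ℕ)) (i : Fin n) : pmax w i = pmax w' i := by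
  unfold pmax
  exact Finset.sup_congr rfl fun j _ => h j

lemma wmax_congr {n k k' : ℕ} {w : Fin n → Fin (k + 1)} {w' : Fin n → Fin (k' + 1)}
    (h : ∀ j, (w j : ℕ) = (w' j : ℕ)) : wmax w = wmax w' := by
  unfold wmax
  exact Finset.sup_congr rfl fun j _ => h j

lemma isRG_congr {n k k' : ℕ} {w : Fin n → Fin (k + 1)} {w' : Fin n → Fin (k' + 1)}
    (h : ∀ j, (w j : ℕ) = (w' j : ℕ)) (hk : k = k') : IsRG w ↔ IsRG w' := by
  unfold IsRG
  constructor
  · rintro ⟨h1, h2, h3⟩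
    exact ⟨fun i => (h i) ▸ h1 i, fun i => pmax_congr h i ▸ (h i) ▸ h2 i,
      by show wmax w' = k'; rw [← wmax_congr h]; exact hk ▸ h3⟩
  · rintro ⟨h1, h2, h3⟩
    exact ⟨fun i => (h i) ▸ h1 i, fun i => (pmax_congr h i) ▸ (h i) ▸ h2 i,
      by show wmax w = k; rw [wmax_congr h]; exact hk.symm ▸ h3⟩

lemma wt_congr {n k k' : ℕ} {w : Fin n → Fin (k + 1)} {w' : Fin n → Fin (k' + 1)}
    (h : ∀ j, (w j : ℕ) = (w' j : ℕ)) : wt w = wt w' := by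
  unfold wt
  exact Finset.prod_congr rfl fun i _ => by rw [h i, pmax_congr h i]

lemma filter_lt_castSucc (n : ℕ) (i : Fin n) :
    (Finset.univ.filter fun j : Fin (n + 1) => j < i.castSucc) =
      (Finset.univ.filter fun j : Fin n => j < i).image Fin.castSucc := by
  ext j
  simp only [Finset.mem_filter, Finset.mem_image, Finset.mem_univ, true_and]
  constructor
  · intro hj
    have hj' : (j : ℕ) < (i : ℕ) := by simpa [Fin.lt_def] using hj
    have hjn : (j : ℕ) < n := lt_trans hj' i.isLt
    exact ⟨⟨(j : ℕ), hjn⟩, Fin.lt_def.mpr (by simpa using hj'), by ext; simp⟩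
  · rintro ⟨a, ha, rfl⟩
    have := Fin.lt_def.mp ha
    exact Fin.lt_def.mpr (by simpa using this)

lemma pmax_snoc {n k : ℕ} (w : Fin n → Fin (k + 1)) (a : Fin (k + 1)) (i : Fin n) :
    pmax (Fin.snoc w a) i.castSucc = pmax w i := by
  unfold pmax
  rw [filter_lt_castSucc, Finset.sup_image]
  exact Finset.sup_congr rfl fun j _ => by simp [Function.comp, Fin.snoc_castSucc]

lemma filter_lt_last (n : ℕ) :
    (Finset.univ.filter fun j : Fin (n + 1) => j < Fin.last n) =
      Finset.univ.image Fin.castSucc := by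
  ext j
  simp only [Finset.mem_filter, Finset.mem_image, Finset.mem_univ, true_and]
  constructor
  · intro hj
    have : (j : ℕ) < n := by simpa [Fin.lt_def] using hj
    exact ⟨⟨j, this⟩, by ext; simp⟩
  · rintro ⟨a, rfl⟩
    simp [Fin.lt_def]

lemma pmax_snoc_last {n k : ℕ} (w : Fin n → Fin (k + 1)) (a : Fin (k + 1)) :
    pmax (Fin.snoc w a) (Fin.last n) = wmax w := by
  unfold pmax wmax
  rw [filter_lt_last, Finset.sup_image]
  exact Finset.sup_congr rfl fun j _ => by simp [Function.comp, Fin.snoc_castSucc]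

lemma univ_succ_eq (n : ℕ) : (Finset.univ : Finset (Fin (n + 1))) =
    insert (Fin.last n) (Finset.univ.image Fin.castSucc) := by
  ext j
  simp only [Finset.mem_univ, Finset.mem_insert, Finset.mem_image, true_iff, true_and]
  cases j using Fin.lastCases with
  | last => exact Or.inl rfl
  | cast i => exact Or.inr ⟨i, rfl⟩

lemma wmax_snoc {n k : ℕ} (w : Fin n → Fin (k + 1)) (a : Fin (k + 1)) :
    wmax (Fin.snoc w a) = max (wmax w) (a : ℕ) := by
  unfold wmax
  rw [univ_succ_eq, Finset.sup_insert, Finset.sup_image, Fin.snoc_last]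
  have h : ((Finset.univ : Finset (Fin n)).sup
      ((fun j => ((Fin.snoc w a : Fin (n + 1) → Fin (k + 1)) j : ℕ)) ∘ Fin.castSucc)) =
      Finset.univ.sup fun j => (w j : ℕ) :=
    Finset.sup_congr rfl fun j _ => by simp
  rw [h]
  exact max_comm _ _

lemma wt_snoc {n k : ℕ} (w : Fin n → Fin (k + 1)) (a : Fin (k + 1)) :
    wt (Fin.snoc w a) = wt w * (if (a : ℕ) ≤ wmax w then X ^ ((a : ℕ) - 1) else 1) := by
  unfold wt
  rw [Fin.prod_univ_castSucc]
  congr 1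
  · exact Finset.prod_congr rfl fun i _ => by rw [Fin.snoc_castSucc, pmax_snoc]
  · rw [Fin.snoc_last, pmax_snoc_last]

lemma isRG_snoc_iff {n k : ℕ} (w : Fin n → Fin (k + 1)) (a : Fin (k + 1)) :
    IsRG (Fin.snoc w a) ↔ (∀ i, 1 ≤ (w i : ℕ)) ∧ (∀ i, (w i : ℕ) ≤ pmax w i + 1) ∧
      1 ≤ (a : ℕ) ∧ (a : ℕ) ≤ wmax w + 1 ∧ max (wmax w) (a : ℕ) = k := by
  unfold IsRG
  rw [show (Finset.univ.sup fun i => ((Fin.snoc w a : Fin (n+1) → Fin (k+1)) i : ℕ)) =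
      wmax (Fin.snoc w a) from rfl, wmax_snoc]
  constructor
  · rintro ⟨h1, h2, h3⟩
    refine ⟨fun i => by simpa [Fin.snoc_castSucc] using h1 i.castSucc,
      fun i => by have := h2 i.castSucc; rwa [Fin.snoc_castSucc, pmax_snoc] at this,
      by simpa [Fin.snoc_last] using h1 (Fin.last n),
      ?_, h3⟩
    have := h2 (Fin.last n)
    rwa [Fin.snoc_last, pmax_snoc_last] at this
  · rintro ⟨h1, h2, h3, h4, h5⟩
    refine ⟨fun i => ?_, fun i => ?_, h5⟩
    · cases i using Fin.lastCases with
      | last => simpa [Fin.snoc_last] using h3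
      | cast j => simpa [Fin.snoc_castSucc] using h1 j
    · cases i using Fin.lastCases with
      | last => rw [Fin.snoc_last, pmax_snoc_last]; exact h4
      | cast j => rw [Fin.snoc_castSucc, pmax_snoc]; exact h2 j

lemma mem_RG_iff {n k : ℕ} (w : Fin n → Fin (k + 1)) : w ∈ RG n k ↔ IsRG w := by
  simp [RG]

lemma wmax_le {n k : ℕ} (w : Fin n → Fin (k + 1)) : wmax w ≤ k :=
  Finset.sup_le fun i _ => (w i).is_le

lemma le_wmax {n k : ℕ} (w : Fin n → Fin (k + 1)) (i : Fin n) : (w i : ℕ) ≤ wmax w :=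
  Finset.le_sup (f := fun j => ((w j : ℕ))) (Finset.mem_univ i)

lemma pmax_last_eq {n k : ℕ} (v : Fin (n + 1) → Fin (k + 1)) :
    pmax v (Fin.last n) = wmax (Fin.init v) := by
  conv_lhs => rw [← Fin.snoc_init_self v]
  rw [pmax_snoc_last]

theorem qS_eq_sum_wt (n k : ℕ) : qS n k = ∑ w ∈ RG n k, wt w := by
  induction n generalizing k with
  | zero =>
    cases k with
    | zero =>
      have h1 : RG 0 0 = Finset.univ := by
        ext w
        simp [RG, IsRG, pmax]
      rw [h1]
      have h2 : ∀ w : Fin 0 → Fin 1, wt w = 1 := fun w => by simp [wt]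
      rw [Finset.sum_congr rfl fun w _ => h2 w, Finset.sum_const]
      simp [qS]
    | succ k =>
      have h1 : RG 0 (k + 1) = ∅ := by
        ext w
        simp [RG, IsRG]
      simp [h1, qS]
  | succ n ih =>
    cases k with
    | zero =>
      have h1 : RG (n + 1) 0 = ∅ := by
        ext w
        simp only [RG, Finset.mem_filter, Finset.mem_univ, true_and,
          Finset.notMem_empty, iff_false]
        rintro ⟨hge, -, -⟩
        have h2 := hge 0
        have h3 := (w 0).is_le
        omega
      simp [h1, qS]
    | succ k =>
      classical
      have hsplit := Finset.sum_filter_add_sum_filter_not (RG (n + 1) (k + 1))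
        (fun v => (v (Fin.last n) : ℕ) ≤ pmax v (Fin.last n)) wt
      -- Part A : the last letter is a new maximum
      have hA : ∑ w ∈ RG n k, wt w =
          ∑ v ∈ (RG (n + 1) (k + 1)).filter
            (fun v => ¬ (v (Fin.last n) : ℕ) ≤ pmax v (Fin.last n)), wt v := by
        refine Finset.sum_nbij'
          (i := fun w => Fin.snoc (fun i => Fin.castSucc (w i)) (Fin.last (k + 1)))
          (j := fun v => fun i =>
            (⟨min ((v i.castSucc : ℕ)) k, by have := min_le_right ((v i.castSucc : ℕ)) k; omega⟩ :
              Fin (k + 1)))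
          ?_ ?_ ?_ ?_ ?_
        · intro w hw
          obtain ⟨h1, h2, h3⟩ := (mem_RG_iff w).mp hw
          have hvals : ∀ j, ((fun i => Fin.castSucc (w i)) j : ℕ) = (w j : ℕ) := fun j => rfl
          have hwm : wmax (fun i => Fin.castSucc (w i)) = k := by
            rw [wmax_congr hvals]; exact h3
          rw [Finset.mem_filter]
          constructor
          · rw [mem_RG_iff, isRG_snoc_iff]
            refine ⟨fun i => h1 i, fun i => by rw [pmax_congr hvals]; exact h2 i, ?_, ?_, ?_⟩
            · simp
            · simp [hwm]
            · simp [hwm]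
          · rw [pmax_snoc_last, hwm]
            simp [Fin.snoc_last]
        · intro v hv
          obtain ⟨hvRG, hvp⟩ := Finset.mem_filter.mp hv
          have hRG := (mem_RG_iff v).mp hvRG
          rw [← Fin.snoc_init_self v, isRG_snoc_iff] at hRG
          obtain ⟨h1, h2, h3, h4, h5⟩ := hRG
          rw [pmax_last_eq] at hvp
          have ha : (v (Fin.last n) : ℕ) = k + 1 := by
            rcases max_cases (wmax (Fin.init v)) ((v (Fin.last n) : ℕ)) with ⟨he, hle⟩ | ⟨he, hlt⟩ <;>
              omega
          have hwm : wmax (Fin.init v) = k := by omega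
          have hle : ∀ i, ((Fin.init v : Fin n → Fin (k + 2)) i : ℕ) ≤ k := fun i => by
            have := le_wmax (Fin.init v) i; omega
          have hvals : ∀ j, (((fun i => (⟨min ((v j.castSucc : ℕ)) k, by
              have := min_le_right ((v j.castSucc : ℕ)) k; omega⟩ : Fin (k+1))) j : Fin (k+1)) : ℕ)
              = ((Fin.init v : Fin n → Fin (k + 2)) j : ℕ) := fun j => by
            simp only [Fin.init]
            exact min_eq_left (hle j)
          rw [mem_RG_iff]
          refine ⟨fun i => by rw [hvals i]; exact h1 i,
            fun i => by rw [hvals i, pmax_congr hvals]; exact h2 i,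
            by show wmax _ = k; rw [wmax_congr hvals]; exact hwm⟩
        · intro w hw
          obtain ⟨h1, h2, h3⟩ := (mem_RG_iff w).mp hw
          funext i
          apply Fin.ext
          simp only [Fin.snoc_castSucc]
          have : (w i : ℕ) ≤ k := by have := le_wmax w i; omega
          simpa using min_eq_left this
        · intro v hv
          obtain ⟨hvRG, hvp⟩ := Finset.mem_filter.mp hv
          have hRG := (mem_RG_iff v).mp hvRG
          rw [← Fin.snoc_init_self v, isRG_snoc_iff] at hRG
          obtain ⟨h1, h2, h3, h4, h5⟩ := hRG
          rw [pmax_last_eq] at hvp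
          have ha : (v (Fin.last n) : ℕ) = k + 1 := by
            rcases max_cases (wmax (Fin.init v)) ((v (Fin.last n) : ℕ)) with ⟨he, hle⟩ | ⟨he, hlt⟩ <;>
              omega
          have hwm : wmax (Fin.init v) = k := by omega
          have hle : ∀ i, ((Fin.init v : Fin n → Fin (k + 2)) i : ℕ) ≤ k := fun i => by
            have := le_wmax (Fin.init v) i; omega
          funext i
          cases i using Fin.lastCases with
          | last =>
            apply Fin.ext
            simp only [Fin.snoc_last, Fin.val_last]
            omega
          | cast j =>
            apply Fin.ext
            simp only [Fin.snoc_castSucc, Fin.coe_castSucc]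
            have := hle j
            simp only [Fin.init] at this
            omega
        · intro w hw
          obtain ⟨h1, h2, h3⟩ := (mem_RG_iff w).mp hw
          have hvals : ∀ j, ((fun i => Fin.castSucc (w i)) j : ℕ) = (w j : ℕ) := fun j => rfl
          have hwm : wmax (fun i => Fin.castSucc (w i)) = k := by
            rw [wmax_congr hvals]; exact h3
          rw [wt_snoc, if_neg (by simp [hwm]), mul_one]
          exact (wt_congr hvals).symm
      -- Part B : the last letter is not a new maximum
      have hB : ∑ q ∈ (RG n (k + 1)) ×ˢ (Finset.univ : Finset (Fin (k + 1))),
            X ^ (q.2 : ℕ) * wt q.1 =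
          ∑ v ∈ (RG (n + 1) (k + 1)).filter
            (fun v => (v (Fin.last n) : ℕ) ≤ pmax v (Fin.last n)), wt v := by
        refine Finset.sum_nbij'
          (i := fun q => Fin.snoc q.1 q.2.succ)
          (j := fun v => (Fin.init v,
            (⟨(v (Fin.last n) : ℕ) - 1, by have := (v (Fin.last n)).isLt; omega⟩ : Fin (k + 1))))
          ?_ ?_ ?_ ?_ ?_
        · rintro ⟨w, b⟩ hq
          rw [Finset.mem_product] at hq
          obtain ⟨h1, h2, h3⟩ := (mem_RG_iff w).mp hq.1
          have hwm : wmax w = k + 1 := h3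
          rw [Finset.mem_filter]
          have hb := b.is_le
          constructor
          · rw [mem_RG_iff, isRG_snoc_iff]
            refine ⟨h1, h2, by simp [Fin.val_succ], ?_, ?_⟩
            · simp only [Fin.val_succ, hwm]; omega
            · simp only [Fin.val_succ, hwm]; omega
          · rw [pmax_last_eq]
            simp only [Fin.snoc_last, Fin.init_snoc, Fin.val_succ, hwm]
            omega
        · intro v hv
          obtain ⟨hvRG, hvp⟩ := Finset.mem_filter.mp hv
          have hRG := (mem_RG_iff v).mp hvRG
          rw [← Fin.snoc_init_self v, isRG_snoc_iff] at hRG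
          obtain ⟨h1, h2, h3, h4, h5⟩ := hRG
          rw [pmax_last_eq] at hvp
          have hwm : wmax (Fin.init v) = k + 1 := by
            rcases max_cases (wmax (Fin.init v)) ((v (Fin.last n) : ℕ)) with ⟨he, _⟩ | ⟨he, _⟩ <;>
              omega
          rw [Finset.mem_product]
          exact ⟨(mem_RG_iff _).mpr ⟨h1, h2, hwm⟩, Finset.mem_univ _⟩
        · rintro ⟨w, b⟩ hq
          simp [Fin.init_snoc, Fin.snoc_last, Prod.ext_iff, Fin.ext_iff, Fin.val_succ]
        · intro v hv
          obtain ⟨hvRG, hvp⟩ := Finset.mem_filter.mp hv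
          have hRG := (mem_RG_iff v).mp hvRG
          rw [← Fin.snoc_init_self v, isRG_snoc_iff] at hRG
          obtain ⟨h1, h2, h3, h4, h5⟩ := hRG
          funext i
          cases i using Fin.lastCases with
          | last =>
            apply Fin.ext
            simp only [Fin.snoc_last, Fin.val_succ]
            omega
          | cast j =>
            simp [Fin.snoc_castSucc, Fin.init]
        · rintro ⟨w, b⟩ hq
          rw [Finset.mem_product] at hq
          obtain ⟨h1, h2, h3⟩ := (mem_RG_iff w).mp hq.1
          have hb := b.is_le
          rw [wt_snoc, if_pos (by simp only [Fin.val_succ]; rw [show wmax w = k + 1 from h3]; omega)]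
          simp only [Fin.val_succ, Nat.add_sub_cancel]
          ring
      -- Assemble
      have hB' : (∑ i ∈ Finset.range (k + 1), (X : Polynomial ℤ) ^ i) * ∑ w ∈ RG n (k + 1), wt w
          = ∑ v ∈ (RG (n + 1) (k + 1)).filter
            (fun v => (v (Fin.last n) : ℕ) ≤ pmax v (Fin.last n)), wt v := by
        have hw : ∀ w : Fin n → Fin (k + 2), ∑ b : Fin (k + 1), X ^ (b : ℕ) * wt w
            = (∑ i ∈ Finset.range (k + 1), (X : Polynomial ℤ) ^ i) * wt w := fun w => by
          rw [← Finset.sum_mul, Fin.sum_univ_eq_sum_range (fun i => (X : Polynomial ℤ) ^ i)]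
        rw [← hB, Finset.sum_product, Finset.sum_congr rfl fun w _ => hw w, ← Finset.mul_sum]
      rw [show qS (n + 1) (k + 1)
          = qS n k + (∑ i ∈ Finset.range (k + 1), X ^ i) * qS n (k + 1) from rfl,
        ih k, ih (k + 1), hA, hB', add_comm]
      exact hsplit
end

section
/- The q-Stirling number of the second kind satisfies S_q[n,k] = Σ_{w ∈ A(n,k)} q^{A(w)} · (1+q)^{B(w)}, where A(n,k) is the set of allowable RG-words of length n with maximum k, A(w) = Σ_i A_i(w) with A_i(w) = w_i − 1 if max(w_1,…,w_{i−1}) ≥ w_i and 0 otherwise, and B(w) = Σ_i B_i(w) with B_i(w) = 1 if max(w_1,…,w_{i−1}) > w_i and 0 otherwise. -/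
open scoped Classical
open Polynomial

/-- An RG-word is allowable if every even letter appears exactly once. -/
def IsAllowable {n k : ℕ} (w : Fin n → Fin (k + 1)) : Prop :=
  ∀ j : ℕ, Even j → (Finset.univ.filter fun i => (w i : ℕ) = j).card ≤ 1

/-- The set `A(n,k)` of allowable RG-words of length `n` with maximum letter `k`. -/
noncomputable def AllowRG (n k : ℕ) : Finset (Fin n → Fin (k + 1)) :=
  Finset.univ.filter fun w => IsRG w ∧ IsAllowable w

/-- The statistic `A(w) = Σᵢ Aᵢ(w)`, where `Aᵢ(w) = wᵢ - 1` if `max(w₁,…,w_{i-1}) ≥ wᵢ`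
and `0` otherwise. -/
def Astat {n k : ℕ} (w : Fin n → Fin (k + 1)) : ℕ :=
  ∑ i : Fin n, if (w i : ℕ) ≤ pmax w i then (w i : ℕ) - 1 else 0

/-- The statistic `B(w) = Σᵢ Bᵢ(w)`, where `Bᵢ(w) = 1` if `max(w₁,…,w_{i-1}) > wᵢ`
and `0` otherwise. -/
def Bstat {n k : ℕ} (w : Fin n → Fin (k + 1)) : ℕ :=
  ∑ i : Fin n, if (w i : ℕ) < pmax w i then 1 else 0

/-!
Remove the last letter `a` of a word `w ∈ A(n+1, k+1)`. If the prefix has maximum `k`, then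
`a = k + 1` is a new record, contributes nothing to `A` and `B`, and the prefix ranges over
`A(n, k)`. Otherwise the prefix lies in `A(n, k+1)`; being an RG-word it already contains every
letter `1, …, k+1`, so `a` must be odd, and every odd `a` is allowed. Such an `a` contributes
`q^(a-1) (1+q)` if `a ≤ k` and `q^k` if `a = k + 1`; summed over odd `a` this is `[k+1]_q`.
Hence the right-hand side satisfies the recursion of `S_q`.
-/

open Finset

variable {n k m : ℕ}

def maxLetter (w : Fin n → Fin (k + 1)) : ℕ :=
  univ.sup fun i => (w i : ℕ)

def IsRestrictedGrowth (w : Fin n → Fin (k + 1)) : Prop :=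
  (∀ i, 1 ≤ (w i : ℕ)) ∧ ∀ i, (w i : ℕ) ≤ pmax w i + 1

noncomputable def weight (w : Fin n → Fin (k + 1)) : ℤ[X] :=
  X ^ Astat w * (1 + X) ^ Bstat w

/-- The factor `q ^ Aᵢ (1 + q) ^ Bᵢ` of a letter `a` whose prefix has maximum `M`. -/
noncomputable def letterWeight (M a : ℕ) : ℤ[X] :=
  X ^ (if a ≤ M then a - 1 else 0) * (1 + X) ^ (if a < M then 1 else 0)

def oddLetters (m : ℕ) : Finset (Fin (m + 1)) :=
  univ.filter fun a => Odd (a : ℕ)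

lemma mem_AllowRG {w : Fin n → Fin (k + 1)} :
    w ∈ AllowRG n k ↔ IsRestrictedGrowth w ∧ maxLetter w = k ∧ IsAllowable w := by
  simp [AllowRG, IsRG, IsRestrictedGrowth, maxLetter, and_assoc]

section congr

variable {k' : ℕ} {w : Fin n → Fin (k + 1)} {v : Fin n → Fin (k' + 1)}

lemma pmax_congr_s2 (h : ∀ i, (w i : ℕ) = v i) : pmax w = pmax v := by
  funext i
  simp only [pmax, h]

lemma maxLetter_congr (h : ∀ i, (w i : ℕ) = v i) : maxLetter w = maxLetter v := by
  simp only [maxLetter, h]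

lemma isRestrictedGrowth_congr (h : ∀ i, (w i : ℕ) = v i) :
    IsRestrictedGrowth w ↔ IsRestrictedGrowth v := by
  simp only [IsRestrictedGrowth, h, pmax_congr_s2 h]

lemma isAllowable_congr (h : ∀ i, (w i : ℕ) = v i) : IsAllowable w ↔ IsAllowable v := by
  simp only [IsAllowable, h]

lemma weight_congr (h : ∀ i, (w i : ℕ) = v i) : weight w = weight v := by
  simp only [weight, Astat, Bstat, h, pmax_congr_s2 h]

end congr

lemma le_maxLetter (w : Fin n → Fin (k + 1)) (i : Fin n) : (w i : ℕ) ≤ maxLetter w :=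
  le_sup (f := fun i => (w i : ℕ)) (mem_univ i)

lemma maxLetter_succ (w : Fin (n + 1) → Fin (k + 1)) :
    maxLetter w = max (maxLetter (Fin.init w)) (w (Fin.last n)) := by
  rw [maxLetter, Fin.univ_castSuccEmb, sup_cons, sup_map, max_comm]
  rfl

lemma pmax_castSucc (w : Fin (n + 1) → Fin (k + 1)) (i : Fin n) :
    pmax w i.castSucc = pmax (Fin.init w) i := by
  simp only [pmax, filter_gt_eq_Iio, Fin.Iio_castSucc, sup_map]
  rfl

lemma pmax_last (w : Fin (n + 1) → Fin (k + 1)) :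
    pmax w (Fin.last n) = maxLetter (Fin.init w) := by
  simp only [pmax, filter_gt_eq_Iio, Fin.Iio_last_eq_map, sup_map]
  rfl

lemma isRestrictedGrowth_succ_iff (w : Fin (n + 1) → Fin (k + 1)) :
    IsRestrictedGrowth w ↔ IsRestrictedGrowth (Fin.init w) ∧
      1 ≤ (w (Fin.last n) : ℕ) ∧ (w (Fin.last n) : ℕ) ≤ maxLetter (Fin.init w) + 1 := by
  simp only [IsRestrictedGrowth, Fin.forall_fin_succ' (n := n), pmax_castSucc, pmax_last,
    Fin.init]
  tauto

lemma card_filter_succ (w : Fin (n + 1) → Fin (k + 1)) (j : ℕ) :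
    #{i | (w i : ℕ) = j} =
      #{i | (Fin.init w i : ℕ) = j} + if (w (Fin.last n) : ℕ) = j then 1 else 0 := by
  rw [Fin.univ_castSuccEmb, filter_cons]
  split_ifs
  · rw [card_cons, filter_map, card_map]
    rfl
  · rw [filter_map, card_map]
    rfl

lemma isAllowable_succ_iff (w : Fin (n + 1) → Fin (k + 1)) :
    IsAllowable w ↔ IsAllowable (Fin.init w) ∧
      (Even (w (Fin.last n) : ℕ) → ∀ i, (Fin.init w i : ℕ) ≠ w (Fin.last n)) := by
  simp only [IsAllowable, card_filter_succ]
  constructor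
  · intro h
    refine ⟨fun j hj => (Nat.le_add_right _ _).trans (h j hj), fun ha i hi => ?_⟩
    have hcard := h _ ha
    rw [if_pos rfl, add_le_iff_nonpos_left, Nat.le_zero, card_eq_zero,
      filter_eq_empty_iff] at hcard
    exact hcard (mem_univ i) hi
  · rintro ⟨h, hlast⟩ j hj
    split_ifs with hj'
    · subst hj'
      rw [card_eq_zero.2 (filter_eq_empty_iff.2 fun i _ => hlast hj i)]
    · exact h j hj

lemma mem_AllowRG_succ {w : Fin (n + 1) → Fin (m + 1)} :
    w ∈ AllowRG (n + 1) m ↔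
      IsRestrictedGrowth (Fin.init w) ∧ IsAllowable (Fin.init w) ∧
      1 ≤ (w (Fin.last n) : ℕ) ∧ (w (Fin.last n) : ℕ) ≤ maxLetter (Fin.init w) + 1 ∧
      max (maxLetter (Fin.init w)) (w (Fin.last n)) = m ∧
      (Even (w (Fin.last n) : ℕ) → ∀ i, (Fin.init w i : ℕ) ≠ w (Fin.last n)) := by
  rw [mem_AllowRG, isRestrictedGrowth_succ_iff, isAllowable_succ_iff, maxLetter_succ]
  tauto

lemma IsRestrictedGrowth.exists_eq {w : Fin n → Fin (k + 1)} (hw : IsRestrictedGrowth w)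
    {j : ℕ} (hj : 1 ≤ j) (hjw : j ≤ maxLetter w) : ∃ i, (w i : ℕ) = j := by
  induction n with
  | zero => simp [maxLetter] at hjw; omega
  | succ n ih =>
    obtain ⟨hinit, -, hlast⟩ := (isRestrictedGrowth_succ_iff w).1 hw
    rw [maxLetter_succ] at hjw
    by_cases hj' : j ≤ maxLetter (Fin.init w)
    · obtain ⟨i, hi⟩ := ih hinit hj'
      exact ⟨i.castSucc, hi⟩
    · exact ⟨Fin.last n, by omega⟩

lemma Astat_succ (w : Fin (n + 1) → Fin (k + 1)) :
    Astat w = Astat (Fin.init w) +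
      if (w (Fin.last n) : ℕ) ≤ maxLetter (Fin.init w) then (w (Fin.last n) : ℕ) - 1 else 0 := by
  rw [Astat, Fin.sum_univ_castSucc, pmax_last]
  simp only [pmax_castSucc]
  rfl

lemma Bstat_succ (w : Fin (n + 1) → Fin (k + 1)) :
    Bstat w = Bstat (Fin.init w) +
      if (w (Fin.last n) : ℕ) < maxLetter (Fin.init w) then 1 else 0 := by
  rw [Bstat, Fin.sum_univ_castSucc, pmax_last]
  simp only [pmax_castSucc]
  rfl

lemma weight_succ (w : Fin (n + 1) → Fin (k + 1)) :
    weight w = weight (Fin.init w) * letterWeight (maxLetter (Fin.init w)) (w (Fin.last n)) := by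
  rw [weight, weight, letterWeight, Astat_succ, Bstat_succ, pow_add, pow_add]
  ring

lemma letterWeight_of_lt {M a : ℕ} (h : M < a) : letterWeight M a = 1 := by
  simp [letterWeight, not_le.2 h, not_lt.2 h.le]

/-- `{0, …, m}` splits into the pairs `{a - 1, a}` for odd `a ≤ m` and, if `m` is even, `{m}`. -/
lemma sum_letterWeight_odd (m : ℕ) :
    ∑ a ∈ (range (m + 2)).filter Odd, letterWeight (m + 1) a = ∑ i ∈ range (m + 1), X ^ i := by
  have hmaps : ∀ i ∈ range (m + 1), 2 * (i / 2) + 1 ∈ (range (m + 2)).filter Odd := by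
    intro i hi
    simp only [mem_filter, mem_range, Nat.odd_iff] at hi ⊢
    omega
  rw [← sum_fiberwise_of_maps_to hmaps]
  refine sum_congr rfl fun a ha => ?_
  simp only [mem_filter, mem_range, Nat.odd_iff] at ha
  obtain ⟨b, rfl⟩ : ∃ b, a = b + 1 := ⟨a - 1, by omega⟩
  rw [letterWeight, if_pos (by omega), Nat.add_sub_cancel]
  by_cases hb : b + 1 < m + 1
  · have hfiber : (range (m + 1)).filter (fun i => 2 * (i / 2) + 1 = b + 1) = {b, b + 1} := by
      ext i
      simp only [mem_filter, mem_range, mem_insert, mem_singleton]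
      omega
    rw [hfiber, sum_pair (by omega), if_pos hb]
    ring
  · have hfiber : (range (m + 1)).filter (fun i => 2 * (i / 2) + 1 = b + 1) = {b} := by
      ext i
      simp only [mem_filter, mem_range, mem_singleton]
      omega
    rw [hfiber, sum_singleton, if_neg hb, pow_zero, mul_one]

lemma sum_letterWeight_oddLetters (m : ℕ) :
    ∑ a ∈ oddLetters (m + 1), letterWeight (m + 1) a = ∑ i ∈ range (m + 1), X ^ i := by
  rw [oddLetters, sum_filter,
    Fin.sum_univ_eq_sum_range (fun a => if Odd a then letterWeight (m + 1) a else 0),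
    ← sum_filter, sum_letterWeight_odd]

lemma sum_weight_filter_maxLetter_init_eq (n k : ℕ) :
    ∑ w ∈ (AllowRG (n + 1) (k + 1)).filter (fun w => maxLetter (Fin.init w) = k + 1), weight w =
      (∑ v ∈ AllowRG n (k + 1), weight v) * ∑ i ∈ range (k + 1), X ^ i := by
  rw [← sum_letterWeight_oddLetters, sum_mul_sum, ← sum_product']
  refine sum_nbij' (fun w => (Fin.init w, w (Fin.last n))) (fun p => Fin.snoc p.1 p.2)
    ?_ ?_ (fun w _ => Fin.snoc_init_self w) (fun p _ => by simp) ?_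
  · intro w hw
    obtain ⟨⟨hrg, hall, h1, -, -, heven⟩, hmax⟩ := by
      simpa only [mem_filter, mem_AllowRG_succ] using hw
    refine mem_product.2 ⟨mem_AllowRG.2 ⟨hrg, hmax, hall⟩, ?_⟩
    simp only [oddLetters, mem_filter, mem_univ, true_and]
    by_contra hodd
    obtain ⟨i, hi⟩ := hrg.exists_eq h1 (hmax.symm ▸ (w (Fin.last n)).is_le)
    exact heven (Nat.not_odd_iff_even.1 hodd) i hi
  · rintro ⟨v, a⟩ hp
    obtain ⟨hv, ha⟩ := mem_product.1 hp
    obtain ⟨hrg, hmax, hall⟩ := mem_AllowRG.1 hv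
    simp only [oddLetters, mem_filter, mem_univ, true_and] at ha
    simp only [mem_filter, mem_AllowRG_succ, Fin.init_snoc, Fin.snoc_last]
    rw [hmax]
    refine ⟨⟨hrg, hall, ha.pos, by omega, max_eq_left a.is_le, fun he => ?_⟩, rfl⟩
    exact absurd ha (Nat.not_odd_iff_even.2 he)
  · intro w hw
    rw [weight_succ, (mem_filter.1 hw).2]

lemma maxLetter_init_eq_and_val_last_eq {w : Fin (n + 1) → Fin (k + 2)}
    (hw : w ∈ (AllowRG (n + 1) (k + 1)).filter fun w => maxLetter (Fin.init w) ≠ k + 1) :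
    maxLetter (Fin.init w) = k ∧ (w (Fin.last n) : ℕ) = k + 1 := by
  obtain ⟨hw, hne⟩ := mem_filter.1 hw
  obtain ⟨-, -, -, hle, hmax, -⟩ := mem_AllowRG_succ.1 hw
  rw [max_def] at hmax
  split_ifs at hmax <;> omega

lemma sum_weight_filter_maxLetter_init_ne (n k : ℕ) :
    ∑ w ∈ (AllowRG (n + 1) (k + 1)).filter (fun w => maxLetter (Fin.init w) ≠ k + 1), weight w =
      ∑ v ∈ AllowRG n k, weight v := by
  have hclamp : ∀ w ∈ (AllowRG (n + 1) (k + 1)).filter (fun w => maxLetter (Fin.init w) ≠ k + 1),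
      ∀ i, (Fin.clamp (Fin.init w i) k : ℕ) = Fin.init w i := by
    intro w hw i
    have hM := (maxLetter_init_eq_and_val_last_eq hw).1
    rw [Fin.coe_clamp, min_eq_left ((le_maxLetter (Fin.init w) i).trans hM.le)]
  refine sum_nbij' (fun w i => Fin.clamp (Fin.init w i) k)
    (fun v => Fin.snoc (fun i => (v i).castSucc) (Fin.last (k + 1))) ?_ ?_ ?_ ?_ ?_
  · intro w hw
    have hv := hclamp w hw
    obtain ⟨hM, -⟩ := maxLetter_init_eq_and_val_last_eq hw
    obtain ⟨hrg, hall, -⟩ := mem_AllowRG_succ.1 (mem_filter.1 hw).1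
    exact mem_AllowRG.2 ⟨(isRestrictedGrowth_congr hv).2 hrg, (maxLetter_congr hv).trans hM,
      (isAllowable_congr hv).2 hall⟩
  · intro v hv
    obtain ⟨hrg, hM, hall⟩ := mem_AllowRG.1 hv
    have hcast : ∀ i, ((v i).castSucc : ℕ) = v i := fun i => rfl
    simp only [mem_filter, mem_AllowRG_succ, Fin.init_snoc, Fin.snoc_last, Fin.val_last,
      maxLetter_congr hcast, isRestrictedGrowth_congr hcast, isAllowable_congr hcast, hM]
    refine ⟨⟨hrg, hall, by omega, le_rfl, max_eq_right k.le_succ, fun _ i => ?_⟩, by omega⟩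
    exact (v i).is_lt.ne
  · intro w hw
    obtain ⟨-, hlast⟩ := maxLetter_init_eq_and_val_last_eq hw
    funext i
    induction i using Fin.lastCases with
    | last => exact Fin.ext (by simp [hlast])
    | cast i => exact Fin.ext (by rw [Fin.snoc_castSucc]; exact hclamp w hw i)
  · intro v _
    funext i
    exact Fin.ext (by simp [Fin.coe_clamp, (v i).is_le])
  · intro w hw
    obtain ⟨hM, hlast⟩ := maxLetter_init_eq_and_val_last_eq hw
    rw [weight_succ, letterWeight_of_lt (by omega), mul_one, weight_congr (hclamp w hw)]

lemma sum_weight_AllowRG_succ_succ (n k : ℕ) :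
    ∑ w ∈ AllowRG (n + 1) (k + 1), weight w =
      ∑ v ∈ AllowRG n k, weight v +
        (∑ i ∈ range (k + 1), X ^ i) * ∑ v ∈ AllowRG n (k + 1), weight v := by
  rw [← sum_filter_not_add_sum_filter _ (fun w => maxLetter (Fin.init w) = k + 1),
    sum_weight_filter_maxLetter_init_ne, sum_weight_filter_maxLetter_init_eq, mul_comm]

lemma sum_weight_AllowRG_zero_zero : ∑ w ∈ AllowRG 0 0, weight w = 1 := by
  have hA : AllowRG 0 0 = univ := eq_univ_of_forall fun w =>
    mem_AllowRG.2 ⟨⟨finZeroElim, finZeroElim⟩, by simp [maxLetter], fun j _ => by simp⟩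
  simp [hA, weight, Astat, Bstat]

lemma AllowRG_zero_succ : AllowRG 0 (k + 1) = ∅ :=
  eq_empty_of_forall_notMem fun w hw => by
    have := (mem_AllowRG.1 hw).2.1
    simp [maxLetter] at this

lemma AllowRG_succ_zero : AllowRG (n + 1) 0 = ∅ :=
  eq_empty_of_forall_notMem fun w hw => by
    have := (mem_AllowRG.1 hw).1.1 0
    omega

theorem qS_eq_sum_allowable (n k : ℕ) :
    qS n k = ∑ w ∈ AllowRG n k, X ^ Astat w * (1 + X) ^ Bstat w := by
  change qS n k = ∑ w ∈ AllowRG n k, weight w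
  induction n generalizing k with
  | zero =>
    cases k with
    | zero => rw [sum_weight_AllowRG_zero_zero]; rfl
    | succ k => rw [AllowRG_zero_succ, sum_empty]; rfl
  | succ n ih =>
    cases k with
    | zero => rw [AllowRG_succ_zero, sum_empty]; rfl
    | succ k => rw [sum_weight_AllowRG_succ_succ, ← ih, ← ih]; rfl
end

section
/- The evaluation of the q-Stirling number of the second kind at q = −1, S_q[n,k]|_{q=−1}, equals the number of weakly increasing allowable RG-words of length n with maximum letter k. -/
open scoped Classical
open Polynomial

/-!
Deleting the last letter `K` of a weakly increasing allowable RG-word with maximum `K` leaves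
such a word with maximum `K - 1` when `K` occurs once, and with maximum `K` otherwise; the
latter is possible only for odd `K`, since an even letter occurs at most once. Conversely,
appending `K` to a word with maximum `K - 1`, or with maximum `K` for odd `K`, gives such a
word. So the numbers `N n k` of these words satisfy
`N (n+1) (k+1) = N n k + [k even] N n (k+1)`, which is the recurrence of `S_q[n,k]` at `q = -1`
because `[k+1]_{-1}` is `1` for even `k` and `0` for odd `k`.
-/

open Finset

lemma exists_eq_of_sup_univ_eq {ι : Type*} [Fintype ι] {f : ι → ℕ} {m : ℕ}
    (h : univ.sup f = m) (hm : m ≠ 0) : ∃ i, f i = m := by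
  rcases (univ : Finset ι).eq_empty_or_nonempty with he | hne
  · simp [he] at h
    omega
  · obtain ⟨i, -, hi⟩ := exists_mem_eq_sup univ hne f
    exact ⟨i, hi ▸ h⟩

lemma eval_neg_one_geom_sum {R : Type*} [CommRing R] (k : ℕ) :
    (∑ i ∈ range (k + 1), (X : R[X]) ^ i).eval (-1) = if Even k then 1 else 0 := by
  simp only [eval_finsetSum, eval_pow, eval_X, neg_one_geom_sum, Nat.even_add_one, ite_not]

lemma pmax_eq_sup_Iio {n k : ℕ} (w : Fin n → Fin (k + 1)) (i : Fin n) :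
    pmax w i = (Iio i).sup fun j => (w j : ℕ) := by
  rw [pmax, filter_gt_eq_Iio]

noncomputable def monotoneAllowableRG (n k : ℕ) : Finset (Fin n → Fin (k + 1)) :=
  {w | IsRG w ∧ IsAllowable w ∧ Monotone w}

lemma mem_monotoneAllowableRG {n k : ℕ} {w : Fin n → Fin (k + 1)} :
    w ∈ monotoneAllowableRG n k ↔ IsRG w ∧ IsAllowable w ∧ Monotone w := by
  simp [monotoneAllowableRG]

lemma card_monotoneAllowableRG_zero (k : ℕ) :
    #(monotoneAllowableRG 0 k) = if k = 0 then 1 else 0 := by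
  simp [monotoneAllowableRG, IsRG, IsAllowable, Monotone, eq_comm, apply_ite card]

lemma monotoneAllowableRG_succ_zero (n : ℕ) : monotoneAllowableRG (n + 1) 0 = ∅ := by
  simp [monotoneAllowableRG, IsRG]

def snocTop {n K K' : ℕ} (h : K' ≤ K) (v : Fin n → Fin (K' + 1)) : Fin (n + 1) → Fin (K + 1) :=
  Fin.snoc (fun i => Fin.castLE (Nat.succ_le_succ h) (v i)) (Fin.last K)

section Snoc

-- `v` will be the initial part of `w`, reread in the alphabet `Fin (K' + 1)` (via `hv`).
variable {n K K' : ℕ} {w : Fin (n + 1) → Fin (K + 1)} {v : Fin n → Fin (K' + 1)}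

lemma pmax_castSucc_of_val_eq (hv : ∀ i, (w i.castSucc : ℕ) = v i) (i : Fin n) :
    pmax w i.castSucc = pmax v i := by
  rw [pmax_eq_sup_Iio, pmax_eq_sup_Iio, ← Fin.map_castSuccEmb_Iio, sup_map]
  exact sup_congr rfl fun j _ => hv j

lemma pmax_last_of_val_eq (hv : ∀ i, (w i.castSucc : ℕ) = v i) :
    pmax w (Fin.last n) = univ.sup fun i => (v i : ℕ) := by
  rw [pmax_eq_sup_Iio, Fin.Iio_last_eq_map, sup_map]
  exact sup_congr rfl fun j _ => hv j

lemma sup_univ_eq_max_of_val_eq (hv : ∀ i, (w i.castSucc : ℕ) = v i) :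
    (univ.sup fun i => (w i : ℕ)) = max (univ.sup fun i => (v i : ℕ)) (w (Fin.last n)) := by
  rw [Fin.univ_castSuccEmb, sup_cons, sup_map, max_comm]
  congr 1
  exact sup_congr rfl fun j _ => hv j

lemma card_filter_val_eq_of_val_eq (hv : ∀ i, (w i.castSucc : ℕ) = v i) (j : ℕ) :
    #{i | (w i : ℕ) = j} = #{i | (v i : ℕ) = j} + if (w (Fin.last n) : ℕ) = j then 1 else 0 := by
  simp only [card_filter, Fin.sum_univ_castSucc, hv]

lemma of_mem_monotoneAllowableRG_succ (hv : ∀ i, (w i.castSucc : ℕ) = v i)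
    (hsup : (univ.sup fun i => (v i : ℕ)) = K') (hw : w ∈ monotoneAllowableRG (n + 1) K) :
    v ∈ monotoneAllowableRG n K' ∧ (w (Fin.last n) : ℕ) = K ∧ (K = K' + 1 ∨ K = K' ∧ Odd K) := by
  obtain ⟨⟨hpos, hgrow, hmax⟩, hall, hmono⟩ := mem_monotoneAllowableRG.mp hw
  have hlast : (w (Fin.last n) : ℕ) = K :=
    le_antisymm (Fin.is_le _) (hmax.symm.trans_le (Finset.sup_le fun i _ => hmono (Fin.le_last i)))
  have hK'K : K' ≤ K := by
    rw [sup_univ_eq_max_of_val_eq hv, hsup] at hmax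
    omega
  have hKK' : K ≤ K' + 1 := by
    simpa [pmax_last_of_val_eq hv, hsup, hlast] using hgrow (Fin.last n)
  have hv_mem : v ∈ monotoneAllowableRG n K' := by
    refine mem_monotoneAllowableRG.mpr ⟨⟨fun i => hv i ▸ hpos _, fun i => ?_, hsup⟩,
      fun j hj => ?_, fun a b hab => ?_⟩
    · rw [← hv, ← pmax_castSucc_of_val_eq hv]
      exact hgrow _
    · have := hall j hj
      rw [card_filter_val_eq_of_val_eq hv] at this
      omega
    · change (v a : ℕ) ≤ v b
      rw [← hv, ← hv]
      exact hmono (Fin.castSucc_le_castSucc_iff.mpr hab)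
  refine ⟨hv_mem, hlast, ?_⟩
  by_contra hK
  have hKeq : K' = K := by omega
  have hKeven : Even K := by
    rw [← Nat.not_odd_iff_even]
    exact fun hodd => hK (Or.inr ⟨hKeq.symm, hodd⟩)
  -- the letter `K = K'` occurs in `v` and again at the end of `w`
  obtain ⟨i, hi⟩ := exists_eq_of_sup_univ_eq hsup (by have := hpos (Fin.last n); omega)
  have hocc : 0 < #{j | (v j : ℕ) = K} := card_pos.mpr ⟨i, by simp [hi, hKeq]⟩
  have := hall K hKeven
  rw [card_filter_val_eq_of_val_eq hv, if_pos hlast] at this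
  omega

lemma mem_monotoneAllowableRG_succ (hv : ∀ i, (w i.castSucc : ℕ) = v i)
    (hv_mem : v ∈ monotoneAllowableRG n K') (hlast : (w (Fin.last n) : ℕ) = K)
    (hK : K = K' + 1 ∨ K = K' ∧ Odd K) : w ∈ monotoneAllowableRG (n + 1) K := by
  obtain ⟨⟨hpos, hgrow, hsup⟩, hall, hmono⟩ := mem_monotoneAllowableRG.mp hv_mem
  have hvle : ∀ i, (v i : ℕ) ≤ K' := fun i =>
    (le_sup (f := fun i => (v i : ℕ)) (mem_univ i)).trans_eq hsup
  have hK1 : 1 ≤ K := by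
    rcases hK with hK | ⟨-, hodd⟩
    · omega
    · exact hodd.pos
  refine mem_monotoneAllowableRG.mpr
    ⟨⟨fun i => ?_, fun i => ?_, ?_⟩, fun j hj => ?_, fun a b hab => ?_⟩
  · induction i using Fin.lastCases with
    | last => omega
    | cast i => exact (hv i).symm ▸ hpos i
  · induction i using Fin.lastCases with
    | last => rw [pmax_last_of_val_eq hv, hsup]; omega
    | cast i => rw [hv, pmax_castSucc_of_val_eq hv]; exact hgrow i
  · rw [sup_univ_eq_max_of_val_eq hv, hsup, hlast]
    omega
  · rw [card_filter_val_eq_of_val_eq hv]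
    split_ifs with hj'
    · -- an even last letter `j = K` is new, so it does not occur in `v`
      have hnone : #{i | (v i : ℕ) = j} = 0 := by
        refine card_eq_zero.mpr (filter_eq_empty_iff.mpr fun i _ hi => ?_)
        have := hvle i
        rcases hK with hK | ⟨hK, hodd⟩
        · omega
        · exact Nat.not_even_iff_odd.mpr hodd (hlast ▸ hj' ▸ hj)
      omega
    · simpa using hall j hj
  · change (w a : ℕ) ≤ w b
    induction b using Fin.lastCases with
    | last => exact (Fin.is_le _).trans_eq hlast.symm
    | cast b =>
      induction a using Fin.lastCases with
      | last => exact absurd hab (not_le.mpr (Fin.castSucc_lt_last b))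
      | cast a =>
        rw [hv, hv]
        exact hmono (Fin.castSucc_le_castSucc_iff.mp hab)

lemma exists_init_of_pmax_last_eq (hw : pmax w (Fin.last n) = K') :
    ∃ v : Fin n → Fin (K' + 1), ∀ i, (w i.castSucc : ℕ) = v i := by
  refine ⟨fun i => ⟨w i.castSucc, Nat.lt_succ_of_le ?_⟩, fun _ => rfl⟩
  rw [← hw, pmax_eq_sup_Iio]
  exact le_sup (f := fun j => (w j : ℕ)) (mem_Iio.mpr (Fin.castSucc_lt_last i))

lemma card_filter_pmax_last_eq (h : K' ≤ K) :
    #{w ∈ monotoneAllowableRG (n + 1) K | pmax w (Fin.last n) = K'} =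
      if K = K' + 1 ∨ K = K' ∧ Odd K then #(monotoneAllowableRG n K') else 0 := by
  have hcast (v : Fin n → Fin (K' + 1)) (i : Fin n) : (snocTop h v i.castSucc : ℕ) = v i := by
    simp [snocTop]
  have hlast (v : Fin n → Fin (K' + 1)) : (snocTop h v (Fin.last n) : ℕ) = K := by
    simp [snocTop]
  split_ifs with hK
  · symm
    refine card_nbij (snocTop h) (fun v hv => ?_) (fun v₁ _ v₂ _ he => ?_) (fun w hw => ?_)
    · have hsup := (mem_monotoneAllowableRG.mp hv).1.2.2
      simp only [mem_coe, mem_filter, pmax_last_of_val_eq (hcast v), hsup, and_true]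
      exact mem_monotoneAllowableRG_succ (hcast v) hv (hlast v) hK
    · funext i
      exact Fin.ext (by simpa only [hcast] using congrArg (fun w => (w i.castSucc : ℕ)) he)
    · simp only [mem_coe, mem_filter] at hw
      obtain ⟨v, hv⟩ := exists_init_of_pmax_last_eq hw.2
      obtain ⟨hv_mem, hw_last, -⟩ :=
        of_mem_monotoneAllowableRG_succ hv (pmax_last_of_val_eq hv ▸ hw.2) hw.1
      refine ⟨v, hv_mem, funext fun i => Fin.ext ?_⟩
      induction i using Fin.lastCases with
      | last => rw [hlast, hw_last]
      | cast i => rw [hcast, hv]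
  · refine card_eq_zero.mpr (filter_eq_empty_iff.mpr fun w hw hpmax => hK ?_)
    obtain ⟨v, hv⟩ := exists_init_of_pmax_last_eq hpmax
    exact (of_mem_monotoneAllowableRG_succ hv (pmax_last_of_val_eq hv ▸ hpmax) hw).2.2

end Snoc

lemma card_monotoneAllowableRG_succ_succ (n k : ℕ) :
    #(monotoneAllowableRG (n + 1) (k + 1)) =
      #(monotoneAllowableRG n k) + if Even k then #(monotoneAllowableRG n (k + 1)) else 0 := by
  have hpmax : Set.MapsTo (fun w => pmax w (Fin.last n))
      (monotoneAllowableRG (n + 1) (k + 1) : Set (Fin (n + 1) → Fin (k + 2)))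
      ({k, k + 1} : Finset ℕ) := fun w hw => by
    obtain ⟨v, hv⟩ := exists_init_of_pmax_last_eq (rfl : pmax w (Fin.last n) = _)
    have := (of_mem_monotoneAllowableRG_succ hv (pmax_last_of_val_eq hv).symm hw).2.2
    simp only [coe_insert, coe_singleton, Set.mem_insert_iff, Set.mem_singleton_iff]
    omega
  rw [card_eq_sum_card_fiberwise hpmax, sum_pair (by omega), card_filter_pmax_last_eq (by omega),
    card_filter_pmax_last_eq (by omega)]
  simp [Nat.odd_add_one]

theorem qS_eval_neg_one (n k : ℕ) :
    (qS n k).eval (-1) =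
      ((Finset.univ.filter fun w : Fin n → Fin (k + 1) =>
        IsRG w ∧ IsAllowable w ∧ Monotone w).card : ℤ) := by
  change _ = (#(monotoneAllowableRG n k) : ℤ)
  induction n generalizing k with
  | zero => cases k <;> simp [qS, card_monotoneAllowableRG_zero]
  | succ n ih =>
    cases k with
    | zero => simp [qS, monotoneAllowableRG_succ_zero]
    | succ k =>
      rw [qS, eval_add, eval_mul, ih, ih, eval_neg_one_geom_sum, card_monotoneAllowableRG_succ_succ]
      split_ifs <;> push_cast <;> ring
end

section
/- For n ≥ 2, the number of allowable RG-words of length n with maximum letter n−1 equals ⌊n/2⌋·⌈n/2⌉. -/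
open scoped Classical

/-- `a(n,k)`, the number of allowable RG-words of length `n` with maximum letter `k`. -/
noncomputable def aCount (n k : ℕ) : ℕ :=
  (Finset.univ.filter fun w : Fin n → Fin (k + 1) => IsRG w ∧ IsAllowable w).card

/-!
Let `M_j` be the maximum of the first `j` letters. The growth condition gives `M_{j+1} ≤ M_j + 1`,
so `M_j ≤ j`; since a word of length `m + 1` must still reach the letter `m`, also `M_j ≥ j - 1`.
This squeezes the word into the shape `1, 2, …, b, v, b + 1, …, m` with `v ≤ b ≤ m`. The letter `v`
is the only repeated one, so the word is allowable iff `v` is odd: `⌈b/2⌉` choices for each `b`,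
and `∑_{b=1}^{m} ⌈b/2⌉ = ⌊(m+1)/2⌋ ⌈(m+1)/2⌉`.
-/

open Finset

section NatSeq

variable {n k : ℕ} {w : Fin n → Fin (k + 1)} {s : ℕ → ℕ}

lemma pmax_eq_sup_range (hs : ∀ i, (w i : ℕ) = s i) (i : Fin n) :
    pmax w i = (range i).sup s := by
  have hmap : (univ.filter fun j : Fin n => j < i).map Fin.valEmbedding = range i := by
    ext j
    simp only [mem_map, mem_filter, mem_univ, true_and, Fin.valEmbedding_apply, mem_range]
    exact ⟨fun ⟨j, hj, hji⟩ => hji ▸ hj, fun hj => ⟨⟨j, by omega⟩, hj, rfl⟩⟩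
  rw [pmax, ← hmap, sup_map]
  exact sup_congr rfl fun j _ => hs j

lemma sup_univ_eq_sup_range (hs : ∀ i, (w i : ℕ) = s i) :
    (univ.sup fun i => (w i : ℕ)) = (range n).sup s := by
  rw [← Nat.Iio_eq_range, ← Fin.map_valEmbedding_univ, sup_map]
  exact sup_congr rfl fun j _ => hs j

lemma isRG_iff_of_val_eq (hs : ∀ i, (w i : ℕ) = s i) :
    IsRG w ↔ (∀ i < n, 1 ≤ s i) ∧ (∀ i < n, s i ≤ (range i).sup s + 1) ∧
      (range n).sup s = k := by
  rw [IsRG, sup_univ_eq_sup_range hs]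
  simp only [pmax_eq_sup_range hs, hs, Fin.forall_iff]

lemma isAllowable_iff : IsAllowable w ↔ ∀ i j, (w i : ℕ) = w j → Even (w i : ℕ) → i = j := by
  simp only [IsAllowable, card_le_one, mem_filter, mem_univ, true_and]
  exact ⟨fun h i j hij he => h _ he i rfl j hij.symm,
    fun h _ he i hi j hj => h i j (hi.trans hj.symm) (hi ▸ he)⟩

end NatSeq

theorem Finset.sup_range_add_one (s : ℕ → ℕ) (j : ℕ) :
    (range (j + 1)).sup s = max ((range j).sup s) (s j) := by
  rw [range_add_one, sup_insert, max_comm]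

section Growth

variable {s : ℕ → ℕ} {N : ℕ}

lemma sup_range_le_add (hgrow : ∀ i < N, s i ≤ (range i).sup s + 1) {i j : ℕ} (hij : i ≤ j)
    (hjN : j ≤ N) : (range j).sup s ≤ (range i).sup s + (j - i) := by
  induction j, hij using Nat.le_induction with
  | base => simp
  | succ j hij ih =>
    have := ih (by omega)
    have := hgrow j (by omega)
    rw [sup_range_add_one]
    omega

lemma sup_range_le_self (hgrow : ∀ i < N, s i ≤ (range i).sup s + 1) {j : ℕ} (hjN : j ≤ N) :
    (range j).sup s ≤ j := by
  simpa using sup_range_le_add hgrow (Nat.zero_le j) hjN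

end Growth

def repeatLetter (b v i : ℕ) : ℕ := if i < b then i + 1 else if i = b then v else i

lemma exists_eq_repeatLetter {m : ℕ} {s : ℕ → ℕ}
    (hgrow : ∀ i < m + 1, s i ≤ (range i).sup s + 1) (hmax : (range (m + 1)).sup s = m) :
    ∃ b ≤ m, s b ≤ b ∧ ∀ i < m + 1, s i = repeatLetter b (s b) i := by
  have hsm : s m ≤ m := (le_sup (f := s) (mem_range.2 (Nat.lt_succ_self m))).trans_eq hmax
  have hex : ∃ b, s b ≤ b := ⟨m, hsm⟩
  classical
  set b := Nat.find hex
  have hb : s b ≤ b := Nat.find_spec hex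
  have hbm : b ≤ m := Nat.find_min' hex hsm
  have hprefix : ∀ i < b, s i = i + 1 := fun i hi => by
    have := Nat.find_min hex hi
    have := hgrow i (by omega)
    have := sup_range_le_self hgrow (by omega : i ≤ m + 1)
    omega
  have hsuffix : ∀ i, b < i → i ≤ m → s i = i := by
    intro i hbi him
    -- past `b` the prefix maximum is squeezed to `i - 1`, so every later letter is a new maximum
    have hb1 : (range (b + 1)).sup s ≤ b := by
      rw [sup_range_add_one]
      exact max_le (sup_range_le_self hgrow (by omega)) hb
    have hi_le := sup_range_le_add hgrow (by omega : b + 1 ≤ i) (by omega : i ≤ m + 1)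
    have hi_ge := sup_range_le_add hgrow (by omega : i + 1 ≤ m + 1) le_rfl
    rw [hmax, sup_range_add_one] at hi_ge
    have := hgrow i (by omega)
    omega
  refine ⟨b, hbm, hb, fun i hi => ?_⟩
  unfold repeatLetter
  split_ifs with h1 h2
  · exact hprefix i h1
  · rw [h2]
  · exact hsuffix i (by omega) (by omega)

lemma repeatLetter_le {b v m i : ℕ} (hvb : v ≤ b) (hbm : b ≤ m) (hi : i < m + 1) :
    repeatLetter b v i ≤ m := by
  unfold repeatLetter
  split_ifs <;> omega

def repeatWord (m b v : ℕ) (i : Fin (m + 1)) : Fin (m + 1) :=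
  Fin.ofNat (m + 1) (repeatLetter b v i)

lemma repeatWord_val {m b v : ℕ} (hvb : v ≤ b) (hbm : b ≤ m) (i : Fin (m + 1)) :
    (repeatWord m b v i : ℕ) = repeatLetter b v i := by
  rw [repeatWord, Fin.val_ofNat,
    Nat.mod_eq_of_lt (Nat.lt_succ_of_le (repeatLetter_le hvb hbm i.isLt))]

lemma isRG_repeatWord {m b v : ℕ} (hv : 1 ≤ v) (hvb : v ≤ b) (hbm : b ≤ m) :
    IsRG (repeatWord m b v) := by
  rw [isRG_iff_of_val_eq (repeatWord_val hvb hbm)]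
  refine ⟨fun i _ => ?_, fun i hi => ?_, le_antisymm ?_ ?_⟩
  · unfold repeatLetter
    split_ifs <;> omega
  · rcases Nat.eq_zero_or_pos i with rfl | hi0
    · simp [repeatLetter, show 0 < b by omega]
    · obtain ⟨j, hji, hj⟩ : ∃ j < i, repeatLetter b v i ≤ repeatLetter b v j + 1 := by
        by_cases hib : i = b + 1
        · exact ⟨b - 1, by omega, by simp only [repeatLetter]; split_ifs <;> omega⟩
        · exact ⟨i - 1, by omega, by simp only [repeatLetter]; split_ifs <;> omega⟩
      have := le_sup (f := repeatLetter b v) (mem_range.2 hji)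
      omega
  · exact Finset.sup_le fun i hi => repeatLetter_le hvb hbm (mem_range.1 hi)
  · obtain ⟨j, hjm, hj⟩ : ∃ j < m + 1, repeatLetter b v j = m := by
      by_cases hbm' : b = m
      · exact ⟨m - 1, by omega, by simp only [repeatLetter]; split_ifs <;> omega⟩
      · exact ⟨m, by omega, by simp only [repeatLetter]; split_ifs <;> omega⟩
    exact hj.symm.trans_le (le_sup (f := repeatLetter b v) (mem_range.2 hjm))

lemma isAllowable_repeatWord {m b v : ℕ} (hvb : v ≤ b) (hbm : b ≤ m) (hv : Odd v) :
    IsAllowable (repeatWord m b v) := by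
  rw [isAllowable_iff]
  intro i j hij heven
  simp only [repeatWord_val hvb hbm] at hij heven
  rw [Nat.odd_iff] at hv
  rw [Nat.even_iff] at heven
  ext
  unfold repeatLetter at hij heven
  split_ifs at hij heven <;> omega

lemma eq_and_eq_of_repeatWord_eq {m b₁ v₁ b₂ v₂ : ℕ} (hvb₁ : v₁ ≤ b₁) (hbm₁ : b₁ ≤ m)
    (hvb₂ : v₂ ≤ b₂) (hbm₂ : b₂ ≤ m) (h : repeatWord m b₁ v₁ = repeatWord m b₂ v₂) :
    b₁ = b₂ ∧ v₁ = v₂ := by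
  have h₁ := congrArg Fin.val (congrFun h ⟨b₁, by omega⟩)
  have h₂ := congrArg Fin.val (congrFun h ⟨b₂, by omega⟩)
  simp only [repeatWord_val hvb₁ hbm₁, repeatWord_val hvb₂ hbm₂, repeatLetter] at h₁ h₂
  split_ifs at h₁ h₂ <;> omega

lemma exists_eq_repeatWord {m : ℕ} {w : Fin (m + 1) → Fin (m + 1)} (hw : IsRG w)
    (ha : IsAllowable w) : ∃ b v, v ≤ b ∧ b ≤ m ∧ Odd v ∧ w = repeatWord m b v := by
  set s : ℕ → ℕ := fun i => if h : i < m + 1 then w ⟨i, h⟩ else 0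
  have hs : ∀ i, (w i : ℕ) = s i := fun i => by simp only [s, dif_pos i.isLt]
  obtain ⟨hpos, hgrow, hmax⟩ := (isRG_iff_of_val_eq hs).1 hw
  obtain ⟨b, hbm, hvb, hw_eq⟩ := exists_eq_repeatLetter hgrow hmax
  have hv := hpos b (by omega)
  have hodd : Odd (s b) := by
    rw [← Nat.not_even_iff_odd]
    intro heven
    have hrep : (w ⟨s b - 1, by omega⟩ : ℕ) = w ⟨b, by omega⟩ := by
      rw [hs, hs, hw_eq _ (by omega)]
      simp only [repeatLetter]
      split_ifs <;> omega
    have := congrArg Fin.val ((isAllowable_iff.1 ha) _ _ hrep (by rw [hrep, hs]; exact heven))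
    simp only at this
    omega
  refine ⟨b, s b, hvb, hbm, hodd, funext fun i => Fin.ext ?_⟩
  rw [repeatWord_val hvb hbm, hs, hw_eq i i.isLt]

lemma sum_Icc_succ_div_two (m : ℕ) :
    ∑ b ∈ Icc 1 m, (b + 1) / 2 = (m + 1) / 2 * ((m + 2) / 2) := by
  induction m with
  | zero => simp
  | succ m ih =>
    rw [sum_Icc_succ_top (by omega), ih, show (m + 1 + 2) / 2 = (m + 1) / 2 + 1 by omega]
    ring

lemma aCount_succ_self (m : ℕ) : aCount (m + 1) m = ∑ b ∈ Icc 1 m, (b + 1) / 2 := by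
  have hparams : ∀ p : (_ : ℕ) × ℕ,
      p ∈ (Icc 1 m).sigma (fun b => range ((b + 1) / 2)) ↔ 2 * p.2 + 1 ≤ p.1 ∧ p.1 ≤ m := by
    intro p
    simp only [mem_sigma, mem_Icc, mem_range]
    omega
  rw [show ∑ b ∈ Icc 1 m, (b + 1) / 2 = #((Icc 1 m).sigma fun b => range ((b + 1) / 2)) by
    simp only [card_sigma, card_range], aCount]
  symm
  refine card_bij (fun p _ => repeatWord m p.1 (2 * p.2 + 1)) ?_ ?_ ?_
  · intro p hp
    obtain ⟨hvb, hbm⟩ := (hparams p).1 hp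
    simp only [mem_filter, mem_univ, true_and]
    exact ⟨isRG_repeatWord (by omega) hvb hbm,
      isAllowable_repeatWord hvb hbm (odd_two_mul_add_one _)⟩
  · rintro ⟨b₁, u₁⟩ hp₁ ⟨b₂, u₂⟩ hp₂ h
    obtain ⟨hvb₁, hbm₁⟩ := (hparams _).1 hp₁
    obtain ⟨hvb₂, hbm₂⟩ := (hparams _).1 hp₂
    obtain ⟨rfl, hv⟩ := eq_and_eq_of_repeatWord_eq hvb₁ hbm₁ hvb₂ hbm₂ h
    obtain rfl : u₁ = u₂ := by dsimp only at hv; omega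
    rfl
  · intro w hw
    simp only [mem_filter, mem_univ, true_and] at hw
    obtain ⟨b, v, hvb, hbm, ⟨u, rfl⟩, rfl⟩ := exists_eq_repeatWord hw.1 hw.2
    exact ⟨⟨b, u⟩, (hparams _).2 ⟨hvb, hbm⟩, rfl⟩

theorem aCount_pred (n : ℕ) (hn : 2 ≤ n) :
    aCount n (n - 1) = n / 2 * ((n + 1) / 2) := by
  obtain ⟨m, rfl⟩ : ∃ m, n = m + 1 := ⟨n - 1, by omega⟩
  rw [Nat.add_sub_cancel, aCount_succ_self, sum_Icc_succ_div_two]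
end

section
/- The total number of weakly increasing allowable RG-words of length n (summed over all values k = 1,…,n of the maximum letter) equals the Fibonacci number F_n, where F_0 = F_1 = 1 and F_n = F_{n−1} + F_{n−2}. -/
open scoped Classical

/-- Fibonacci numbers with `F 0 = F 1 = 1`. -/
def Fb : ℕ → ℕ
  | 0 => 1
  | 1 => 1
  | n + 2 => Fb (n + 1) + Fb n

/-!
A weakly increasing RG-word rises by `0` or `1` at each step, and allowability says that it
can stay put only at an odd letter. So these words are exactly the chains `1 = w₁, w₂, …, wₙ`
with `wᵢ₊₁ = wᵢ + 1`, or `wᵢ₊₁ = wᵢ` for odd `wᵢ`, and their maximum letter is the last one.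
The number of such chains of a given length depends only on the parity of the first letter:
from an odd letter one may continue with an odd or an even letter, from an even letter only with
an odd one. The two counts therefore satisfy the Fibonacci recursion.
-/

/-- The letter `b` may follow `a` in a weakly increasing allowable RG-word. -/
def StepRel (a b : ℕ) : Prop := b = a + 1 ∨ (b = a ∧ Odd a)

def nextLetters (a : ℕ) : Finset ℕ := if Even a then {a + 1} else {a, a + 1}

lemma mem_nextLetters {a b : ℕ} : b ∈ nextLetters a ↔ StepRel a b := by
  unfold nextLetters StepRel
  split_ifs with ha
  · simp [← Nat.not_even_iff_odd, ha]
  · simp [Nat.not_even_iff_odd.mp ha, or_comm]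

/-- The words `a b₁ … bₙ` of length `n + 1` whose consecutive letters are related by `StepRel`. -/
def stepChains (a : ℕ) : ℕ → Finset (List ℕ)
  | 0 => {[a]}
  | n + 1 => (nextLetters a).biUnion fun b => (stepChains b n).image (a :: ·)

lemma length_of_mem_stepChains {a n : ℕ} {l : List ℕ} (hl : l ∈ stepChains a n) :
    l.length = n + 1 := by
  induction n generalizing a l with
  | zero => simp_all [stepChains]
  | succ n ih =>
    simp only [stepChains, Finset.mem_biUnion, Finset.mem_image] at hl
    obtain ⟨b, -, t, ht, rfl⟩ := hl
    simp [ih ht]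

lemma head?_of_mem_stepChains {a n : ℕ} {l : List ℕ} (hl : l ∈ stepChains a n) :
    l.head? = some a := by
  cases n with
  | zero => simp_all [stepChains]
  | succ n =>
    simp only [stepChains, Finset.mem_biUnion, Finset.mem_image] at hl
    obtain ⟨b, -, t, -, rfl⟩ := hl
    rfl

lemma getLastD_mem_Icc_of_mem_stepChains {a n d : ℕ} {l : List ℕ} (hl : l ∈ stepChains a n) :
    l.getLastD d ∈ Finset.Icc a (a + n) := by
  induction n generalizing a l d with
  | zero => simp_all [stepChains]
  | succ n ih =>
    simp only [stepChains, Finset.mem_biUnion, Finset.mem_image, mem_nextLetters] at hl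
    obtain ⟨b, hab, t, ht, rfl⟩ := hl
    have := ih (d := a) ht
    rw [List.getLastD_cons]
    simp only [Finset.mem_Icc, StepRel] at this hab ⊢
    omega

lemma ofFn_mem_stepChains_iff {a n : ℕ} {f : Fin (n + 1) → ℕ} :
    List.ofFn f ∈ stepChains a n ↔ f 0 = a ∧ ∀ i : Fin n, StepRel (f i.castSucc) (f i.succ) := by
  induction n generalizing a with
  | zero => simp [stepChains, List.ofFn_succ]
  | succ n ih =>
    rw [List.ofFn_succ, stepChains]
    simp only [Finset.mem_biUnion, Finset.mem_image, mem_nextLetters, List.cons.injEq,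
      Fin.forall_fin_succ, ← Fin.succ_castSucc]
    constructor
    · rintro ⟨b, hab, _, ht, rfl, rfl⟩
      obtain ⟨rfl, hsteps⟩ := ih.mp ht
      exact ⟨rfl, hab, hsteps⟩
    · rintro ⟨rfl, h0, hsteps⟩
      exact ⟨_, h0, _, ih.mpr ⟨rfl, hsteps⟩, rfl, rfl⟩

lemma card_stepChains_succ (a n : ℕ) :
    (stepChains a (n + 1)).card = ∑ b ∈ nextLetters a, (stepChains b n).card := by
  rw [stepChains, Finset.card_biUnion]
  · exact Finset.sum_congr rfl fun b _ => Finset.card_image_of_injective _ (List.cons_injective)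
  · intro b _ b' _ hbb'
    simp only [Function.onFun, Finset.disjoint_left, Finset.mem_image]
    rintro _ ⟨t, ht, rfl⟩ ⟨t', ht', htt'⟩
    rw [List.cons.injEq] at htt'
    have h := head?_of_mem_stepChains ht
    rw [← htt'.2, head?_of_mem_stepChains ht', Option.some_inj] at h
    exact hbb' h.symm

lemma card_stepChains (a n : ℕ) :
    (stepChains a n).card = if Even a then Fb n else Fb (n + 1) := by
  induction n generalizing a with
  | zero => simp [stepChains, Fb]
  | succ n ih =>
    rw [card_stepChains_succ, nextLetters]
    by_cases ha : Even a
    · simp [ha, ih, Nat.even_add_one]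
    · rw [if_neg ha, Finset.sum_pair (by omega)]
      simp [ha, ih, Nat.even_add_one, Fb]

lemma stepRel_iff {a b : ℕ} : StepRel a b ↔ a ≤ b ∧ b ≤ a + 1 ∧ (a = b → Odd b) := by
  unfold StepRel
  constructor
  · rintro (rfl | ⟨rfl, ha⟩)
    · exact ⟨by omega, le_rfl, by omega⟩
    · exact ⟨le_rfl, by omega, fun _ => ha⟩
  · rintro ⟨hab, hba, hodd⟩
    rcases hab.eq_or_lt with rfl | hlt
    · exact Or.inr ⟨rfl, hodd rfl⟩
    · exact Or.inl (by omega)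

lemma List.getLastD_ofFn {α : Type*} {n : ℕ} (f : Fin (n + 1) → α) (d : α) :
    (List.ofFn f).getLastD d = f (Fin.last n) := by
  rw [List.ofFn_succ_last, List.getLastD_concat]

section Words

variable {n k : ℕ} {w : Fin (n + 1) → Fin (k + 1)}

lemma pmax_zero (w : Fin (n + 1) → Fin (k + 1)) : pmax w 0 = 0 := by
  simp [pmax]

lemma Monotone.pmax_succ (hw : Monotone w) (i : Fin n) : pmax w i.succ = w i.castSucc := by
  apply le_antisymm
  · refine Finset.sup_le fun j hj => hw ?_
    simpa [Fin.le_castSucc_iff] using hj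
  · exact Finset.le_sup (f := fun j => (w j : ℕ)) (by simp)

lemma Monotone.sup_val_eq_last (hw : Monotone w) :
    (Finset.univ.sup fun i => (w i : ℕ)) = w (Fin.last n) :=
  le_antisymm (Finset.sup_le fun i _ => hw (Fin.le_last i))
    (Finset.le_sup (f := fun i => (w i : ℕ)) (Finset.mem_univ _))

lemma isRG_iff_of_monotone (hw : Monotone w) :
    IsRG w ↔ (w 0 : ℕ) = 1 ∧ (∀ i : Fin n, (w i.succ : ℕ) ≤ w i.castSucc + 1) ∧
      (w (Fin.last n) : ℕ) = k := by
  rw [IsRG, hw.sup_val_eq_last]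
  constructor
  · rintro ⟨hpos, hgrowth, hmax⟩
    refine ⟨?_, fun i => ?_, hmax⟩
    · have := hgrowth 0
      rw [pmax_zero] at this
      have := hpos 0
      omega
    · simpa [hw.pmax_succ] using hgrowth i.succ
  · rintro ⟨h0, hstep, hlast⟩
    refine ⟨fun i => h0.symm.trans_le (hw (Fin.zero_le i)), fun i => ?_, hlast⟩
    cases i using Fin.cases with
    | zero => simp [pmax_zero, h0]
    | succ i => simpa [hw.pmax_succ] using hstep i

lemma isAllowable_iff_of_monotone (hw : Monotone w) :
    IsAllowable w ↔ ∀ i : Fin n, w i.castSucc = w i.succ → Odd (w i.succ : ℕ) := by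
  constructor
  · intro h i heq
    by_contra hodd
    have := Finset.card_le_one.mp (h _ (Nat.not_odd_iff_even.mp hodd)) i.castSucc
      (by simp [heq]) i.succ (by simp)
    exact Fin.castSucc_lt_succ.ne this
  · intro h j hj
    have key : ∀ a b : Fin (n + 1), a < b → (w a : ℕ) = j → (w b : ℕ) ≠ j := by
      intro a b hab ha hb
      obtain ⟨a, rfl⟩ := Fin.exists_castSucc_eq.mpr (Fin.ne_last_of_lt hab)
      have h1 := hw (Fin.castSucc_le_succ a)
      have h2 := hw (Fin.castSucc_lt_iff_succ_le.mp hab)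
      have heq : w a.castSucc = w a.succ := le_antisymm h1 (by rw [Fin.le_iff_val_le_val]; omega)
      exact Nat.not_odd_iff_even.mpr hj (by rw [← ha, heq]; exact h a heq)
    refine Finset.card_le_one.mpr fun a ha b hb => ?_
    simp only [Finset.mem_filter, Finset.mem_univ, true_and] at ha hb
    rcases lt_trichotomy a b with hab | hab | hab
    · exact absurd hb (key a b hab ha)
    · exact hab
    · exact absurd ha (key b a hab hb)

lemma isRG_and_isAllowable_and_monotone_iff :
    IsRG w ∧ IsAllowable w ∧ Monotone w ↔ (w 0 : ℕ) = 1 ∧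
      (∀ i : Fin n, StepRel (w i.castSucc) (w i.succ)) ∧ (w (Fin.last n) : ℕ) = k := by
  simp only [stepRel_iff]
  constructor
  · rintro ⟨hrg, hall, hw⟩
    obtain ⟨h0, hstep, hlast⟩ := (isRG_iff_of_monotone hw).mp hrg
    have hodd := (isAllowable_iff_of_monotone hw).mp hall
    exact ⟨h0, fun i => ⟨hw (Fin.castSucc_le_succ i), hstep i, fun h => hodd i (Fin.ext h)⟩,
      hlast⟩
  · rintro ⟨h0, hsteps, hlast⟩
    have hw : Monotone w := Fin.monotone_iff_le_succ.mpr fun i => (hsteps i).1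
    exact ⟨(isRG_iff_of_monotone hw).mpr ⟨h0, fun i => (hsteps i).2.1, hlast⟩,
      (isAllowable_iff_of_monotone hw).mpr fun i h => (hsteps i).2.2 (congrArg Fin.val h), hw⟩

end Words

lemma card_monotone_allowable_rg_eq_card_stepChains (n k : ℕ) :
    (Finset.univ.filter fun w : Fin (n + 1) → Fin (k + 1) =>
        IsRG w ∧ IsAllowable w ∧ Monotone w).card =
      ((stepChains 1 n).filter (·.getLastD 0 = k)).card := by
  refine Finset.card_bij (fun w _ => List.ofFn fun i => (w i : ℕ)) ?_ ?_ ?_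
  · intro w hw
    obtain ⟨h0, hsteps, hlast⟩ :=
      isRG_and_isAllowable_and_monotone_iff.mp (Finset.mem_filter.mp hw).2
    simp only [Finset.mem_filter, ofFn_mem_stepChains_iff, List.getLastD_ofFn]
    exact ⟨⟨h0, hsteps⟩, hlast⟩
  · intro w _ w' _ h
    funext i
    exact Fin.ext (congrFun (List.ofFn_injective h) i)
  · intro l hl
    rw [Finset.mem_filter] at hl
    obtain ⟨f, rfl⟩ : ∃ f : Fin (n + 1) → ℕ, List.ofFn f = l :=
      ⟨fun i => l[(i : ℕ)]'(by rw [length_of_mem_stepChains hl.1]; exact i.isLt),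
        List.ext_getElem (by simp [length_of_mem_stepChains hl.1]) fun _ _ _ => List.getElem_ofFn _⟩
    rw [ofFn_mem_stepChains_iff, List.getLastD_ofFn] at hl
    obtain ⟨⟨h0, hsteps⟩, hlast⟩ := hl
    have hf : Monotone f := Fin.monotone_iff_le_succ.mpr fun i => (stepRel_iff.mp (hsteps i)).1
    refine ⟨fun i => ⟨f i, Nat.lt_succ_of_le (hlast ▸ hf (Fin.le_last i))⟩, ?_, rfl⟩
    simp only [Finset.mem_filter, Finset.mem_univ, true_and]
    exact isRG_and_isAllowable_and_monotone_iff.mpr ⟨h0, hsteps, hlast⟩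

theorem total_unmatched_eq_fib (n : ℕ) (hn : 1 ≤ n) :
    (∑ k ∈ Finset.Icc 1 n,
        (Finset.univ.filter fun w : Fin n → Fin (k + 1) =>
          IsRG w ∧ IsAllowable w ∧ Monotone w).card) = Fb n := by
  obtain ⟨m, rfl⟩ : ∃ m, n = m + 1 := ⟨n - 1, by omega⟩
  calc _ = ∑ k ∈ Finset.Icc 1 (m + 1), ((stepChains 1 m).filter (·.getLastD 0 = k)).card :=
        Finset.sum_congr rfl fun k _ => card_monotone_allowable_rg_eq_card_stepChains m k
    _ = (stepChains 1 m).card :=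
        (Finset.card_eq_sum_card_fiberwise fun _ hl =>
          add_comm 1 m ▸ getLastD_mem_Icc_of_mem_stepChains hl).symm
    _ = Fb (m + 1) := by simp [card_stepChains]
end

section
/- The allowable Stirling numbers of the first kind d(n,k), defined as the number of placements of n−k rooks on shaded squares of the alternately-shaded staircase board of length n with no two rooks in a column, satisfy d(n,k) = d(n−1,k−1) + ⌈(n−1)/2⌉·d(n−1,k), with d(n,0) = δ_{n,0}, d(n,n) = 1, and d(n,k) = 0 for k > n. -/
/-!
Record a placement by the height of the rook in each column (`0` for an empty column); then
`d(n,k)` counts tuples with exactly `n - k` nonzero entries, each entry chosen from the shaded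
squares of its column. The leftmost column has `n - 1` squares, `⌈(n-1)/2⌉` of them shaded, and
removing it leaves the staircase of length `n - 1`. Leaving that column empty gives `d(n-1,k-1)`
placements, and each of its shaded squares gives `d(n-1,k)`.
-/

open scoped Classical

/-- The allowable Stirling number of the first kind `d(n,k)`: the number of placements of
`n - k` rooks, no two in the same column, all lying on shaded squares of the alternately
shaded staircase board of length `n`.  Column `c` (indexed from the left starting at `0`)
has `n - 1 - c` squares; `f c = 0` encodes an empty column and `f c = b + 1` encodes a
rook with `b` squares below it, the square being shaded exactly when `b` is even.  The
number of rooks `r` is required to satisfy `r + k = n` (so `d(n,k) = 0` when `k > n`). -/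
noncomputable def dStir (n k : ℕ) : ℕ :=
  (Finset.univ.filter fun f : Fin (n - 1) → Fin n =>
    (∀ c, (f c : ℕ) ≤ n - 1 - (c : ℕ)) ∧
    (∀ c, (f c : ℕ) ≠ 0 → Even ((f c : ℕ) - 1)) ∧
    (Finset.univ.filter fun c => (f c : ℕ) ≠ 0).card + k = n).card

open Finset Fintype

namespace Fin

variable {m : ℕ} {α : Fin (m + 1) → Type*}

lemma card_filter_piFinset_eq_sum (S : ∀ i, Finset (α i)) (P : (∀ i, α i) → Prop)
    [DecidablePred P] :
    #{g ∈ piFinset S | P g} = ∑ a ∈ S 0, #{t ∈ piFinset (tail S) | P (cons a t)} := by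
  have hS : piFinset S = (S 0 ×ˢ piFinset (tail S)).map (consEquiv α).toEmbedding := by
    simpa using filter_piFinset_eq_map_consEquiv S fun _ => True
  simp only [hS, card_filter, sum_map, sum_product]
  rfl

lemma card_filter_cons_ne_zero {β : Type*} [Zero β] [DecidableEq β] (a : β) (t : Fin m → β) :
    #{c | (cons a t : Fin (m + 1) → β) c ≠ 0} = #{c | t c ≠ 0} + if a ≠ 0 then 1 else 0 := by
  rw [card_filter, card_filter, sum_univ_succ, add_comm]
  simp only [cons_zero, cons_succ]

end Fin

section RookNumber

variable {α : Type*} [Zero α] [DecidableEq α] {m : ℕ}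

/-- Placements of `r` rooks, at most one per column, where column `c` offers the positions
`S c` and the value `0` stands for an empty column. -/
def rookNumber (S : Fin m → Finset α) (r : ℕ) : ℕ :=
  #{g ∈ piFinset S | #{c | g c ≠ 0} = r}

lemma rookNumber_zero {S : Fin m → Finset α} (hS : ∀ c, 0 ∈ S c) : rookNumber S 0 = 1 := by
  rw [rookNumber, card_eq_one]
  refine ⟨0, ?_⟩
  ext g
  simp only [mem_filter, mem_piFinset, card_eq_zero, filter_eq_empty_iff, mem_univ, true_implies,
    not_not, mem_singleton, funext_iff, Pi.zero_apply]
  exact ⟨And.right, fun hg => ⟨fun c => (@hg c) ▸ hS c, hg⟩⟩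

lemma rookNumber_eq_zero_of_lt (S : Fin m → Finset α) {r : ℕ} (hr : m < r) :
    rookNumber S r = 0 := by
  rw [rookNumber, card_eq_zero, filter_eq_empty_iff]
  intro g _ hg
  have := card_filter_le (univ : Finset (Fin m)) fun c => g c ≠ 0
  rw [card_univ, Fintype.card_fin] at this
  omega

lemma rookNumber_succ {S : Fin (m + 1) → Finset α} (hS : 0 ∈ S 0) (r : ℕ) :
    rookNumber S (r + 1) =
      rookNumber (Fin.tail S) (r + 1) + #((S 0).erase 0) * rookNumber (Fin.tail S) r := by
  rw [rookNumber, Fin.card_filter_piFinset_eq_sum, ← add_sum_erase _ _ hS]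
  have h_occupied : ∀ a ∈ (S 0).erase 0,
      #{t ∈ piFinset (Fin.tail S) | #{c | (Fin.cons a t : Fin (m + 1) → α) c ≠ 0} = r + 1} =
        rookNumber (Fin.tail S) r := fun a ha => by
    simp [Fin.card_filter_cons_ne_zero, ne_of_mem_erase ha, rookNumber]
  rw [sum_congr rfl h_occupied, sum_const, smul_eq_mul]
  simp [Fin.card_filter_cons_ne_zero, rookNumber]

end RookNumber

section Staircase

/-- The admissible values of `f c` in `dStir` for a column of `h` squares. -/
def shadedColumn (h : ℕ) : Finset ℕ := {v ∈ range (h + 1) | v ≠ 0 → Even (v - 1)}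

lemma mem_shadedColumn {h v : ℕ} : v ∈ shadedColumn h ↔ v ≤ h ∧ (v ≠ 0 → Even (v - 1)) := by
  simp [shadedColumn]

lemma zero_mem_shadedColumn (h : ℕ) : 0 ∈ shadedColumn h := by
  simp [mem_shadedColumn]

lemma card_erase_zero_shadedColumn (h : ℕ) : #((shadedColumn h).erase 0) = (h + 1) / 2 := by
  have h_odd : (shadedColumn h).erase 0 =
      (range ((h + 1) / 2)).image fun j => 2 * j + 1 := by
    ext v
    simp only [mem_erase, mem_shadedColumn, mem_image, mem_range, Nat.even_iff]
    constructor
    · rintro ⟨hv, hvh, hodd⟩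
      exact ⟨v / 2, by omega, by omega⟩
    · rintro ⟨j, hj, rfl⟩
      omega
  rw [h_odd, card_image_of_injective _ fun a b (hab : 2 * a + 1 = 2 * b + 1) => by omega,
    Finset.card_range]

/-- The columns of the staircase board of length `m + 1`, longest first. -/
def staircase (m : ℕ) : Fin m → Finset ℕ := fun c => shadedColumn (m - c)

lemma tail_staircase (m : ℕ) : Fin.tail (staircase (m + 1)) = staircase m := by
  funext c
  simp [Fin.tail, staircase]

lemma dStir_eq_rookNumber {n k : ℕ} (hk : k ≤ n) :
    dStir n k = rookNumber (staircase (n - 1)) (n - k) := by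
  refine card_nbij (fun f c => (f c : ℕ)) ?_ ?_ ?_
  · intro f hf
    simp only [coe_filter, Set.mem_ofPred_eq, mem_univ, true_and] at hf
    obtain ⟨hle, hshaded, hcard⟩ := hf
    simp only [coe_filter, mem_piFinset, Set.mem_ofPred_eq]
    exact ⟨fun c => mem_shadedColumn.2 ⟨hle c, hshaded c⟩, by omega⟩
  · intro f _ g _ hfg
    funext c
    exact Fin.ext (congrFun hfg c)
  · intro g hg
    simp only [coe_filter, mem_piFinset, Set.mem_ofPred_eq] at hg
    obtain ⟨hg, hcard⟩ := hg
    have hlt : ∀ c, g c < n := fun c => by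
      have := (mem_shadedColumn.1 (hg c)).1
      omega
    refine ⟨fun c => ⟨g c, hlt c⟩, ?_, rfl⟩
    simp only [coe_filter, Set.mem_ofPred_eq, mem_univ, true_and]
    exact ⟨fun c => (mem_shadedColumn.1 (hg c)).1, fun c => (mem_shadedColumn.1 (hg c)).2,
      by omega⟩

end Staircase

lemma dStir_eq_zero_of_lt {n k : ℕ} (h : n < k) : dStir n k = 0 := by
  rw [dStir, card_eq_zero, filter_eq_empty_iff]
  rintro f - ⟨-, -, hcard⟩
  omega

lemma dStir_self (n : ℕ) : dStir n n = 1 := by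
  rw [dStir_eq_rookNumber le_rfl, Nat.sub_self]
  exact rookNumber_zero fun _ => zero_mem_shadedColumn _

lemma dStir_zero_right (n : ℕ) : dStir n 0 = if n = 0 then 1 else 0 := by
  rcases n.eq_zero_or_pos with rfl | hn
  · exact dStir_self 0
  · rw [if_neg hn.ne', dStir_eq_rookNumber (Nat.zero_le n), Nat.sub_zero,
      rookNumber_eq_zero_of_lt _ (Nat.sub_lt hn one_pos)]

lemma dStir_add_two_add_one {m j : ℕ} (hj : j ≤ m) :
    dStir (m + 2) (j + 1) = dStir (m + 1) j + (m + 2) / 2 * dStir (m + 1) (j + 1) := by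
  rw [dStir_eq_rookNumber (by omega), dStir_eq_rookNumber (by omega),
    dStir_eq_rookNumber (by omega), show m + 2 - (j + 1) = m - j + 1 by omega,
    show m + 1 - j = m - j + 1 by omega, show m + 1 - (j + 1) = m - j by omega,
    show m + 2 - 1 = m + 1 from rfl, Nat.add_sub_cancel]
  rw [rookNumber_succ (zero_mem_shadedColumn _), tail_staircase]
  congr 2
  exact card_erase_zero_shadedColumn (m + 1)

theorem dStir_recurrence :
    (∀ n k : ℕ, 1 ≤ n → 1 ≤ k → k ≤ n →
      dStir n k = dStir (n - 1) (k - 1) + ((n - 1) + 1) / 2 * dStir (n - 1) k) ∧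
    (∀ n : ℕ, dStir n 0 = if n = 0 then 1 else 0) ∧
    (∀ n : ℕ, dStir n n = 1) ∧
    (∀ n k : ℕ, n < k → dStir n k = 0) := by
  refine ⟨fun n k hn hk hkn => ?_, dStir_zero_right, dStir_self, fun _ _ => dStir_eq_zero_of_lt⟩
  rcases hkn.eq_or_lt with rfl | hlt
  · rw [dStir_self, dStir_self, dStir_eq_zero_of_lt (Nat.sub_lt hn one_pos), mul_zero, add_zero]
  · obtain ⟨m, rfl⟩ : ∃ m, n = m + 2 := ⟨n - 2, by omega⟩
    obtain ⟨j, rfl⟩ : ∃ j, k = j + 1 := ⟨k - 1, by omega⟩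
    exact dStir_add_two_add_one (by omega)
end

section
/- The allowable Stirling numbers of the first kind satisfy d(n,1) = ((n−1)/2)!² when n is odd, and d(n,1) = (n/2)·(⌊(n−1)/2⌋!)² when n is even. -/
open scoped Classical

lemma card_odd_range (N : ℕ) :
    ((Finset.range N).filter fun x => x % 2 = 1).card = N / 2 := by
  induction N with
  | zero => simp
  | succ n ih =>
    rw [Finset.range_add_one, Finset.filter_insert]
    by_cases h : n % 2 = 1
    · rw [if_pos h, Finset.card_insert_of_notMem (by simp), ih]; omega
    · rw [if_neg h, ih]; omega

lemma col_card (n m : ℕ) (hm : m < n) :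
    (Finset.univ.filter fun x : Fin n =>
        (x : ℕ) ≠ 0 ∧ (x : ℕ) ≤ m ∧ Even ((x : ℕ) - 1)).card = (m + 1) / 2 := by
  rw [← card_odd_range (m + 1)]
  refine Finset.card_bij (fun x _ => (x : ℕ)) ?_ ?_ ?_
  · intro a ha
    simp only [Finset.mem_filter, Finset.mem_univ, true_and, Nat.even_iff] at ha
    simp only [Finset.mem_filter, Finset.mem_range]
    omega
  · intro a ha b hb h
    exact Fin.val_injective h
  · intro b hb
    simp only [Finset.mem_filter, Finset.mem_range] at hb
    refine ⟨⟨b, by omega⟩, ?_, rfl⟩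
    simp only [Finset.mem_filter, Finset.mem_univ, true_and, Nat.even_iff]
    omega

lemma prod_vals (m : ℕ) :
    (∏ j ∈ Finset.range (2 * m), (j + 2) / 2) = m.factorial ^ 2 ∧
    (∏ j ∈ Finset.range (2 * m + 1), (j + 2) / 2) = (m + 1) * m.factorial ^ 2 := by
  induction m with
  | zero => simp
  | succ m ih =>
    obtain ⟨h1, h2⟩ := ih
    have e : 2 * (m + 1) = (2 * m + 1) + 1 := by ring
    constructor
    · rw [e, Finset.prod_range_succ, h2]
      have : (2 * m + 1 + 2) / 2 = m + 1 := by omega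
      rw [this, Nat.factorial_succ]
      ring
    · have e2 : 2 * (m + 1) + 1 = (2 * m + 1) + 1 + 1 := by ring
      rw [e2, Finset.prod_range_succ, Finset.prod_range_succ, h2]
      have a1 : (2 * m + 1 + 2) / 2 = m + 1 := by omega
      have a2 : (2 * m + 1 + 1 + 2) / 2 = m + 2 := by omega
      rw [a1, a2, Nat.factorial_succ]
      ring

lemma dStir_one_eq (n : ℕ) (hn : 1 ≤ n) :
    dStir n 1 = ∏ j ∈ Finset.range (n - 1), (j + 2) / 2 := by
  classical
  unfold dStir
  set S : Fin (n - 1) → Finset (Fin n) := fun c =>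
    Finset.univ.filter fun x : Fin n =>
      (x : ℕ) ≠ 0 ∧ (x : ℕ) ≤ n - 1 - (c : ℕ) ∧ Even ((x : ℕ) - 1) with hS
  have hset : (Finset.univ.filter fun f : Fin (n - 1) → Fin n =>
      (∀ c, (f c : ℕ) ≤ n - 1 - (c : ℕ)) ∧
      (∀ c, (f c : ℕ) ≠ 0 → Even ((f c : ℕ) - 1)) ∧
      (Finset.univ.filter fun c => (f c : ℕ) ≠ 0).card + 1 = n) = Fintype.piFinset S := by
    ext f
    simp only [Finset.mem_filter, Finset.mem_univ, true_and, Fintype.mem_piFinset, hS]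
    constructor
    · rintro ⟨h1, h2, h3⟩ c
      have hall : ∀ c, (f c : ℕ) ≠ 0 := by
        by_contra hc
        push_neg at hc
        obtain ⟨c0, hc0⟩ := hc
        have hsub : (Finset.univ.filter fun c => (f c : ℕ) ≠ 0) ⊆
            Finset.univ.erase c0 := by
          intro x hx
          simp only [Finset.mem_filter, Finset.mem_univ, true_and] at hx
          simp only [Finset.mem_erase, Finset.mem_univ, and_true]
          rintro rfl; exact hx hc0
        have := Finset.card_le_card hsub
        rw [Finset.card_erase_of_mem (Finset.mem_univ _), Finset.card_univ,
          Fintype.card_fin] at this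
        have hc1 := c0.isLt
        omega
      exact ⟨hall c, h1 c, h2 c (hall c)⟩
    · intro h
      refine ⟨fun c => (h c).2.1, fun c _ => (h c).2.2, ?_⟩
      have : (Finset.univ.filter fun c : Fin (n - 1) => (f c : ℕ) ≠ 0) = Finset.univ := by
        apply Finset.filter_true_of_mem
        intro c _
        exact (h c).1
      rw [this, Finset.card_univ, Fintype.card_fin]
      omega
  rw [hset, Fintype.card_piFinset]
  have hterm : ∀ c : Fin (n - 1), (S c).card = (n - 1 - (c : ℕ) + 1) / 2 := by
    intro c
    rw [hS]
    exact col_card n _ (by omega)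
  calc (∏ c : Fin (n - 1), (S c).card)
      = ∏ c : Fin (n - 1), (n - 1 - (c : ℕ) + 1) / 2 := by
        exact Finset.prod_congr rfl fun c _ => hterm c
    _ = ∏ i ∈ Finset.range (n - 1), (n - 1 - i + 1) / 2 :=
        Fin.prod_univ_eq_prod_range (fun i => (n - 1 - i + 1) / 2) (n - 1)
    _ = ∏ j ∈ Finset.range (n - 1), (j + 2) / 2 := by
        rw [← Finset.prod_range_reflect (fun j => (j + 2) / 2) (n - 1)]
        apply Finset.prod_congr rfl
        intro i hi
        simp only [Finset.mem_range] at hi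
        congr 1
        omega

theorem dStir_one (n : ℕ) :
    (Odd n → dStir n 1 = ((n - 1) / 2).factorial ^ 2) ∧
    (Even n → dStir n 1 = n / 2 * ((n - 1) / 2).factorial ^ 2) := by
  constructor
  · rintro ⟨m, rfl⟩
    rw [dStir_one_eq _ (by omega), show 2 * m + 1 - 1 = 2 * m from by omega,
      show 2 * m / 2 = m from by omega, (prod_vals m).1]
  · rintro ⟨m, rfl⟩
    rcases Nat.eq_zero_or_pos m with rfl | hm
    · have h0 : dStir 0 1 = 0 := by
        unfold dStir
        rw [Finset.card_eq_zero, Finset.filter_eq_empty_iff]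
        rintro f - ⟨-, -, h3⟩
        omega
      simpa using h0
    · rw [dStir_one_eq _ (by omega), show m + m - 1 = 2 * (m - 1) + 1 from by omega,
        show (2 * (m - 1) + 1) / 2 = m - 1 from by omega,
        show (m + m) / 2 = m from by omega, (prod_vals (m - 1)).2]
      congr 1
      omega
end

section
/- The row sums of the allowable Stirling numbers of the first kind satisfy r(n) = Σ_{k=0}^n d(n,k) = d(n+2, 1). -/
open scoped Classical
open Finset

private lemma cardq (N : ℕ) :
    ((Finset.range N).filter (fun x => x ≠ 0 → Even (x - 1))).card = N / 2 + min N 1 := by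
  induction N with
  | zero => simp
  | succ N ih =>
    rw [Finset.range_add_one, Finset.filter_insert]
    by_cases h : (N ≠ 0 → Even (N - 1))
    · rw [if_pos h, Finset.card_insert_of_notMem (by simp), ih]
      rcases Nat.eq_zero_or_pos N with h0 | h0
      · subst h0; simp
      · have := Nat.even_iff.mp (h (by omega)); omega
    · rw [if_neg h, ih]
      push_neg at h
      have h2 := Nat.odd_iff.mp (Nat.not_even_iff_odd.mp h.2)
      have h1 := h.1
      omega

private lemma cardq' (N : ℕ) :
    ((Finset.range N).filter (fun x => x ≠ 0 ∧ Even (x - 1))).card = N / 2 := by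
  induction N with
  | zero => simp
  | succ N ih =>
    rw [Finset.range_add_one, Finset.filter_insert]
    by_cases h : (N ≠ 0 ∧ Even (N - 1))
    · rw [if_pos h, Finset.card_insert_of_notMem (by simp), ih]
      have h1 := h.1
      have := Nat.even_iff.mp h.2; omega
    · rw [if_neg h, ih]
      rcases Nat.eq_zero_or_pos N with h0 | h0
      · subst h0; simp
      · have h2 : ¬ Even (N - 1) := fun he => h ⟨by omega, he⟩
        have := Nat.odd_iff.mp (Nat.not_even_iff_odd.mp h2)
        omega

private lemma colcard (n m : ℕ) (hm : m < n) (q : ℕ → Prop) [DecidablePred q]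
    [DecidablePred fun x : Fin n => (x : ℕ) ≤ m ∧ q (x : ℕ)] :
    (Finset.univ.filter (fun x : Fin n => (x : ℕ) ≤ m ∧ q (x : ℕ))).card
      = ((Finset.range (m + 1)).filter q).card := by
  refine Finset.card_bij (fun x _ => (x : ℕ)) ?_ ?_ ?_
  · intro a ha
    simp only [Finset.mem_filter, Finset.mem_univ, true_and] at ha
    simp only [Finset.mem_filter, Finset.mem_range]
    exact ⟨by omega, ha.2⟩
  · intro a _ b _ h; exact Fin.val_injective h
  · intro b hb
    simp only [Finset.mem_filter, Finset.mem_range] at hb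
    refine ⟨⟨b, by omega⟩, ?_, rfl⟩
    simp only [Finset.mem_filter, Finset.mem_univ, true_and]
    exact ⟨by omega, hb.2⟩

private lemma filter_forall_card {N n : ℕ} (p : Fin N → Fin n → Prop)
    [∀ c, DecidablePred (p c)]
    [DecidablePred fun f : Fin N → Fin n => ∀ c, p c (f c)] :
    (Finset.univ.filter (fun f : Fin N → Fin n => ∀ c, p c (f c))).card
      = ∏ c, (Finset.univ.filter (p c)).card := by
  rw [← Fintype.card_piFinset]
  congr 1
  ext f
  simp only [Finset.mem_filter, Finset.mem_univ, true_and, Fintype.mem_piFinset,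
    Finset.filter_congr_decidable]

private lemma prodid (n : ℕ) :
    (∏ i ∈ Finset.range (n - 1), ((n - i) / 2 + 1))
      = ∏ i ∈ Finset.range (n + 1), ((n + 2 - i) / 2) := by
  cases n with
  | zero => simp
  | succ m =>
    rw [← Finset.prod_range_reflect (fun i => ((m + 1 - i) / 2 + 1)) (m + 1 - 1),
        ← Finset.prod_range_reflect (fun i => ((m + 1 + 2 - i) / 2)) (m + 1 + 1)]
    have hL : ∀ i ∈ Finset.range m, ((m + 1 - (m - 1 - i)) / 2 + 1) = ((i + 2) / 2 + 1) := by
      intro i hi; rw [Finset.mem_range] at hi; congr 2; omega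
    have hR : ∀ i ∈ Finset.range (m + 2), ((m + 3 - (m + 1 - i)) / 2) = ((i + 2) / 2) := by
      intro i hi; rw [Finset.mem_range] at hi; congr 1; omega
    simp only [Nat.add_sub_cancel]
    rw [Finset.prod_congr rfl hL, show m + 1 + 2 = m + 3 from rfl,
        Finset.prod_congr rfl hR, Finset.prod_range_succ', Finset.prod_range_succ']
    norm_num
    exact Finset.prod_congr rfl (fun i _ => by omega)

theorem dStir_row_sum (n : ℕ) :
    (∑ k ∈ Finset.range (n + 1), dStir n k) = dStir (n + 2) 1 := by
  have hL : (∑ k ∈ Finset.range (n + 1), dStir n k)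
      = (Finset.univ.filter (fun f : Fin (n - 1) → Fin n =>
          ∀ c, (f c : ℕ) ≤ n - 1 - (c : ℕ) ∧ ((f c : ℕ) ≠ 0 → Even ((f c : ℕ) - 1)))).card := by
    simp only [dStir]
    rw [← Finset.card_biUnion]
    · congr 1
      ext f
      simp only [Finset.mem_biUnion, Finset.mem_range, Finset.mem_filter, Finset.mem_univ,
        true_and]
      constructor
      · rintro ⟨k, hk, h1, h2, h3⟩ c
        exact ⟨h1 c, h2 c⟩
      · intro h
        have hc : (Finset.univ.filter fun c : Fin (n - 1) => (f c : ℕ) ≠ 0).card ≤ n - 1 := by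
          calc (Finset.univ.filter fun c : Fin (n - 1) => (f c : ℕ) ≠ 0).card
              ≤ (Finset.univ : Finset (Fin (n - 1))).card := Finset.card_filter_le _ _
            _ = n - 1 := by simp
        exact ⟨n - (Finset.univ.filter fun c => (f c : ℕ) ≠ 0).card, by omega,
          fun c => (h c).1, fun c => (h c).2, by omega⟩
    · intro a _ b _ hab
      simp only [Finset.disjoint_left, Finset.mem_filter]
      rintro f ⟨_, _, _, h1⟩ ⟨_, _, _, h2⟩
      omega
  have hR : dStir (n + 2) 1
      = (Finset.univ.filter (fun f : Fin (n + 2 - 1) → Fin (n + 2) =>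
          ∀ c, (f c : ℕ) ≤ n + 2 - 1 - (c : ℕ) ∧
            ((f c : ℕ) ≠ 0 ∧ Even ((f c : ℕ) - 1)))).card := by
    simp only [dStir]
    congr 1
    ext f
    simp only [Finset.mem_filter, Finset.mem_univ, true_and]
    constructor
    · rintro ⟨h1, h2, h3⟩ c
      have huniv : (Finset.univ.filter fun c : Fin (n + 2 - 1) => (f c : ℕ) ≠ 0)
          = Finset.univ := by
        apply Finset.eq_univ_of_card
        rw [Fintype.card_fin]
        clear h1 h2 hL
        omega
      have hmem : c ∈ Finset.univ.filter fun c : Fin (n + 2 - 1) => (f c : ℕ) ≠ 0 := by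
        rw [huniv]; exact Finset.mem_univ c
      have hne : (f c : ℕ) ≠ 0 := (Finset.mem_filter.mp hmem).2
      exact ⟨h1 c, hne, h2 c hne⟩
    · intro h
      refine ⟨fun c => (h c).1, fun c _ => (h c).2.2, ?_⟩
      rw [Finset.filter_true_of_mem (fun c _ => (h c).2.1)]
      simp
  have e1 : (Finset.univ.filter (fun f : Fin (n - 1) → Fin n =>
        ∀ c, (f c : ℕ) ≤ n - 1 - (c : ℕ) ∧ ((f c : ℕ) ≠ 0 → Even ((f c : ℕ) - 1)))).card
      = ∏ c : Fin (n - 1), (Finset.univ.filter (fun x : Fin n =>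
          (x : ℕ) ≤ n - 1 - (c : ℕ) ∧ ((x : ℕ) ≠ 0 → Even ((x : ℕ) - 1)))).card :=
    filter_forall_card (fun (c : Fin (n - 1)) (x : Fin n) =>
      (x : ℕ) ≤ n - 1 - (c : ℕ) ∧ ((x : ℕ) ≠ 0 → Even ((x : ℕ) - 1)))
  have e2 : (Finset.univ.filter (fun f : Fin (n + 2 - 1) → Fin (n + 2) =>
        ∀ c, (f c : ℕ) ≤ n + 2 - 1 - (c : ℕ) ∧ ((f c : ℕ) ≠ 0 ∧ Even ((f c : ℕ) - 1)))).card
      = ∏ c : Fin (n + 2 - 1), (Finset.univ.filter (fun x : Fin (n + 2) =>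
          (x : ℕ) ≤ n + 2 - 1 - (c : ℕ) ∧ ((x : ℕ) ≠ 0 ∧ Even ((x : ℕ) - 1)))).card :=
    filter_forall_card (fun (c : Fin (n + 2 - 1)) (x : Fin (n + 2)) =>
      (x : ℕ) ≤ n + 2 - 1 - (c : ℕ) ∧ ((x : ℕ) ≠ 0 ∧ Even ((x : ℕ) - 1)))
  rw [hL, hR, e1, e2]
  clear hL hR e1 e2
  have hLc : ∀ c : Fin (n - 1),
      (Finset.univ.filter (fun x : Fin n => (x : ℕ) ≤ n - 1 - (c : ℕ) ∧
        ((x : ℕ) ≠ 0 → Even ((x : ℕ) - 1)))).card = (n - (c : ℕ)) / 2 + 1 := by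
    intro c
    have hc : (c : ℕ) < n - 1 := c.isLt
    rw [colcard n (n - 1 - (c : ℕ)) (by omega) (fun x => x ≠ 0 → Even (x - 1)), cardq]
    omega
  have hRc : ∀ c : Fin (n + 2 - 1),
      (Finset.univ.filter (fun x : Fin (n + 2) => (x : ℕ) ≤ n + 2 - 1 - (c : ℕ) ∧
        ((x : ℕ) ≠ 0 ∧ Even ((x : ℕ) - 1)))).card = (n + 2 - (c : ℕ)) / 2 := by
    intro c
    have hc : (c : ℕ) < n + 2 - 1 := c.isLt
    rw [colcard (n + 2) (n + 2 - 1 - (c : ℕ)) (by omega) (fun x => x ≠ 0 ∧ Even (x - 1)),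
      cardq']
    omega
  rw [Finset.prod_congr rfl (fun c _ => hLc c), Finset.prod_congr rfl (fun c _ => hRc c),
    Fin.prod_univ_eq_prod_range (fun i => (n - i) / 2 + 1) (n - 1),
    Fin.prod_univ_eq_prod_range (fun i => (n + 2 - i) / 2) (n + 2 - 1)]
  have : n + 2 - 1 = n + 1 := rfl
  rw [this]
  exact prodid n
end

section
/- The generating function of unmatched rook placements—placements of n rooks, no two in a column, all lying in shaded squares of the first row of the staircase board of length m—weighted by q^{(number of squares below the rooks)} equals q^{n(n−1)} · binom(⌊m/2⌋, n)_{q²}, the q²-binomial coefficient. -/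
open scoped Classical
open Polynomial

/-- Rook placements of `n` rooks, no two in the same column, on the staircase board of
length `m` (column `c`, indexed from the left starting at `0`, has `m - 1 - c` squares).
`f c = 0` means column `c` is empty, and `f c = b + 1` means column `c` carries a rook
with `b` squares below it. -/
def Rooks (m n : ℕ) : Finset (Fin (m - 1) → Fin m) :=
  Finset.univ.filter fun f =>
    (∀ c, (f c : ℕ) ≤ m - 1 - (c : ℕ)) ∧
    (Finset.univ.filter fun c => (f c : ℕ) ≠ 0).card = n

/-- The total number of squares strictly below the rooks of the placement `f`. -/
def rbelow {m : ℕ} (f : Fin (m - 1) → Fin m) : ℕ := ∑ c, ((f c : ℕ) - 1)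

/-- The (unsigned) `q`-Stirling numbers of the first kind:
`c_q[n,k] = c_q[n-1,k-1] + [n-1]_q ⬝ c_q[n-1,k]`, `c_q[n,0] = δ_{n,0}`. -/
noncomputable def cq : ℕ → ℕ → Polynomial ℤ
  | 0, 0 => 1
  | 0, _ + 1 => 0
  | _ + 1, 0 => 0
  | n + 1, k + 1 => cq n k + (∑ i ∈ Finset.range n, X ^ i) * cq n (k + 1)

/-- The Gaussian (q-binomial) coefficient as a polynomial in `q = X`. -/
noncomputable def gauss : ℕ → ℕ → Polynomial ℤ
  | _, 0 => 1
  | 0, _ + 1 => 0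
  | n + 1, k + 1 => gauss n k + X ^ (k + 1) * gauss n (k + 1)

/-- Unmatched rook placements: `n` rooks, no two in a column, all lying in shaded squares
of the first row of the staircase board of length `m` (the first-row square of column `c`
has `m - 2 - c` squares below it, and is shaded when that number is even). -/
def FirstRowShaded (m n : ℕ) : Finset (Fin (m - 1) → Fin m) :=
  (Rooks m n).filter fun f =>
    ∀ c, (f c : ℕ) ≠ 0 → ((f c : ℕ) = m - 1 - (c : ℕ) ∧ Even ((f c : ℕ) - 1))

lemma gauss_zero_right (k : ℕ) : gauss k 0 = 1 := by cases k <;> simp [gauss]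

lemma gauss_of_lt : ∀ k n, k < n → gauss k n = 0
  | 0, _ + 1, _ => by simp [gauss]
  | k + 1, n + 1, h => by
    rw [gauss, gauss_of_lt k n (by omega), gauss_of_lt k (n + 1) (by omega)]
    simp

lemma gauss_diag : ∀ k, gauss k k = 1
  | 0 => by simp [gauss]
  | k + 1 => by rw [gauss, gauss_diag k, gauss_of_lt k (k + 1) (by omega)]; simp

lemma gauss_one : ∀ k, gauss k 1 = ∑ i ∈ Finset.range k, (X : Polynomial ℤ) ^ i
  | 0 => by simp [gauss]
  | k + 1 => by
    rw [gauss, gauss_zero_right, gauss_one k, Finset.sum_range_succ']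
    simp [pow_succ, ← Finset.sum_mul]
    ring

lemma gauss_alt : ∀ k n, n ≤ k →
    gauss (k + 1) (n + 1) = gauss k (n + 1) + X ^ (k - n) * gauss k n
  | 0, 0, _ => by simp [gauss]
  | k + 1, 0, _ => by
    rw [gauss, gauss_one, gauss_one, Finset.sum_range_succ]
    simp
  | k + 1, n + 1, h => by
    rcases Nat.lt_or_ge (n + 1) (k + 1) with h' | h'
    · have hx : (X : Polynomial ℤ) ^ (n + 1 + 1) * X ^ (k - (n + 1)) =
          X ^ (k + 1 - (n + 1)) * X ^ (n + 1) := by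
        rw [← pow_add, ← pow_add]; congr 1; omega
      rw [gauss]
      conv_lhs => rw [gauss_alt k n (by omega), gauss_alt k (n + 1) (by omega)]
      conv_rhs => rw [gauss, gauss]
      have e1 : k + 1 - (n + 1) = k - n := by omega
      rw [e1] at hx ⊢
      linear_combination gauss k (n + 1) * hx
    · have : n = k := by omega
      subst this
      rw [gauss_of_lt (n + 1) (n + 1 + 1) (by omega), gauss_diag, gauss_diag]
      simp

lemma sum_powersetCard : ∀ k n : ℕ,
    ∑ S ∈ (Finset.range k).powersetCard n, (X : Polynomial ℤ) ^ (2 * ∑ t ∈ S, t) =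
      X ^ (n * (n - 1)) * (gauss k n).comp (X ^ 2)
  | k, 0 => by
    simp [Finset.powersetCard_zero, gauss_zero_right]
  | 0, n + 1 => by
    rw [gauss_of_lt 0 (n + 1) (by omega)]
    rw [Finset.powersetCard_eq_empty.2 (by simp)]
    simp
  | k + 1, n + 1 => by
    have hk : k ∉ Finset.range k := by simp
    have hinj : ∀ S ∈ (Finset.range k).powersetCard n,
        ∀ T ∈ (Finset.range k).powersetCard n, insert k S = insert k T → S = T := by
      intro S hS T hT hST
      have hS' : k ∉ S := fun hc => hk ((Finset.mem_powersetCard.1 hS).1 hc)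
      have hT' : k ∉ T := fun hc => hk ((Finset.mem_powersetCard.1 hT).1 hc)
      have := congrArg (fun s => Finset.erase s k) hST
      simpa [Finset.erase_insert hS', Finset.erase_insert hT'] using this
    have hdisj : Disjoint ((Finset.range k).powersetCard (n + 1))
        (((Finset.range k).powersetCard n).image (insert k)) := by
      rw [Finset.disjoint_right]
      intro S hS hS'
      obtain ⟨T, hT, rfl⟩ := Finset.mem_image.1 hS
      exact hk ((Finset.mem_powersetCard.1 hS').1 (Finset.mem_insert_self k T))
    rw [Finset.range_add_one, Finset.powersetCard_succ_insert hk, Finset.sum_union hdisj,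
      Finset.sum_image hinj]
    have step : ∀ S ∈ (Finset.range k).powersetCard n,
        (X : Polynomial ℤ) ^ (2 * ∑ t ∈ insert k S, t) = X ^ (2 * k) * X ^ (2 * ∑ t ∈ S, t) := by
      intro S hS
      have hS' : k ∉ S := fun hc => hk ((Finset.mem_powersetCard.1 hS).1 hc)
      rw [Finset.sum_insert hS', ← pow_add]
      ring_nf
    rw [Finset.sum_congr rfl step, ← Finset.mul_sum, sum_powersetCard k (n + 1),
      sum_powersetCard k n]
    rcases Nat.lt_or_ge k n with h | h
    · rw [gauss_of_lt k (n + 1) (by omega), gauss_of_lt k n (by omega),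
        gauss_of_lt (k + 1) (n + 1) (by omega)]
      simp
    · rw [gauss_alt k n h, Polynomial.add_comp, Polynomial.mul_comp,
        Polynomial.X_pow_comp, ← pow_mul]
      have e : 2 * k + n * (n - 1) = (n + 1) * (n + 1 - 1) + (k - n) * 2 := by
        rcases n with _ | n
        · simp; omega
        · have h1 : n + 1 ≤ k := h
          simp only [Nat.add_sub_cancel]
          zify [h1]
          ring
      have hx : (X : Polynomial ℤ) ^ (2 * k) * X ^ (n * (n - 1)) =
          X ^ ((n + 1) * (n + 1 - 1)) * X ^ ((k - n) * 2) := by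
        rw [← pow_add, ← pow_add, e]
      linear_combination (gauss k n).comp ((X : Polynomial ℤ) ^ 2) * hx

theorem sum_unmatched_rooks (m n : ℕ) :
    (∑ f ∈ FirstRowShaded m n, X ^ rbelow f) =
      X ^ (n * (n - 1)) * (gauss (m / 2) n).comp (X ^ 2) := by
  match m with
  | 0 =>
    rcases n with _ | n
    · have huniv : FirstRowShaded 0 0 = Finset.univ := by
        ext f
        simp [FirstRowShaded, Rooks]
      rw [huniv, gauss_zero_right]
      simp [rbelow]
    · have hempty : FirstRowShaded 0 (n + 1) = ∅ := by
        ext f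
        simp [FirstRowShaded, Rooks]
      rw [hempty, Nat.zero_div, gauss_of_lt 0 (n + 1) (by omega)]
      simp
  | 1 =>
    rcases n with _ | n
    · have huniv : FirstRowShaded 1 0 = Finset.univ := by
        ext f
        simp [FirstRowShaded, Rooks]
      rw [huniv, gauss_zero_right]
      simp [rbelow]
    · have hempty : FirstRowShaded 1 (n + 1) = ∅ := by
        ext f
        simp [FirstRowShaded, Rooks]
      rw [hempty, show (1:ℕ)/2 = 0 from rfl, gauss_of_lt 0 (n + 1) (by omega)]
      simp
  | M + 2 =>
    set k := (M + 2) / 2 with hkdef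
    have h2k : ∀ j, j < k → 2 * j ≤ M := by omega
    -- the column corresponding to index j
    have hcol : ∀ j : ℕ, M - 2 * j < M + 2 - 1 := by omega
    set col : ℕ → Fin (M + 2 - 1) := fun j => ⟨M - 2 * j, hcol j⟩ with hcoldef
    have hcval : ∀ j, (col j : ℕ) = M - 2 * j := fun j => rfl
    have hcle : ∀ c : Fin (M + 2 - 1), (c : ℕ) ≤ M := fun c => by
      have := c.isLt; omega
    set i : (Fin (M + 2 - 1) → Fin (M + 2)) → Finset ℕ :=
      fun f => (Finset.range k).filter fun j => (f (col j) : ℕ) ≠ 0 with hidef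
    set jm : Finset ℕ → (Fin (M + 2 - 1) → Fin (M + 2)) :=
      fun S c => if (M - (c : ℕ)) % 2 = 0 ∧ (M - (c : ℕ)) / 2 ∈ S
        then (⟨M + 1 - (c : ℕ), by omega⟩ : Fin (M + 2)) else 0 with hjmdef
    have hcolinj : ∀ j1 ∈ Finset.range k, ∀ j2 ∈ Finset.range k,
        col j1 = col j2 → j1 = j2 := by
      intro j1 h1 j2 h2 h
      have := congrArg Fin.val h
      simp only [hcval] at this
      have := h2k j1 (Finset.mem_range.1 h1)
      have := h2k j2 (Finset.mem_range.1 h2)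
      omega
    -- membership unpacking for FirstRowShaded
    have hmem : ∀ f, f ∈ FirstRowShaded (M + 2) n ↔
        ((∀ c, (f c : ℕ) ≤ M + 2 - 1 - (c : ℕ)) ∧
          (Finset.univ.filter fun c => (f c : ℕ) ≠ 0).card = n) ∧
        (∀ c, (f c : ℕ) ≠ 0 → ((f c : ℕ) = M + 2 - 1 - (c : ℕ) ∧ Even ((f c : ℕ) - 1))) := by
      intro f
      simp [FirstRowShaded, Rooks, and_assoc]
    -- the nonzero-column set of f is the image of (i f) under col
    have hset : ∀ f ∈ FirstRowShaded (M + 2) n,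
        (Finset.univ.filter fun c => (f c : ℕ) ≠ 0) = (i f).image col := by
      intro f hf
      obtain ⟨⟨hf1, hf2⟩, hf3⟩ := (hmem f).1 hf
      ext c
      simp only [Finset.mem_filter, Finset.mem_univ, true_and, Finset.mem_image, hidef]
      constructor
      · intro hc
        obtain ⟨hv, he⟩ := hf3 c hc
        have hpar : (M - (c : ℕ)) % 2 = 0 := by
          rw [Nat.even_iff] at he
          have := hcle c
          omega
        refine ⟨(M - (c : ℕ)) / 2, ?_, ?_⟩
        · simp only [Finset.mem_filter, Finset.mem_range]
          have hcj : col ((M - (c : ℕ)) / 2) = c := by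
            apply Fin.ext
            simp only [hcval]
            have := hcle c
            omega
          refine ⟨by have := hcle c; omega, by rw [hcj]; exact hc⟩
        · apply Fin.ext
          simp only [hcval]
          have := hcle c
          omega
      · rintro ⟨j, hj, rfl⟩
        exact hj.2
    have hweight : ∀ f ∈ FirstRowShaded (M + 2) n, rbelow f = 2 * ∑ t ∈ i f, t := by
      intro f hf
      obtain ⟨⟨hf1, hf2⟩, hf3⟩ := (hmem f).1 hf
      have hsub : (Finset.univ.filter fun c => (f c : ℕ) ≠ 0) ⊆ Finset.univ :=
        Finset.filter_subset _ _
      have : rbelow f = ∑ c ∈ Finset.univ.filter (fun c => (f c : ℕ) ≠ 0), ((f c : ℕ) - 1) := by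
        rw [rbelow]
        refine (Finset.sum_subset hsub ?_).symm
        intro c _ hc
        simp only [Finset.mem_filter, Finset.mem_univ, true_and, not_not] at hc
        omega
      have hinj2 : ∀ j1 ∈ i f, ∀ j2 ∈ i f, col j1 = col j2 → j1 = j2 := by
        intro j1 h1 j2 h2 h
        exact hcolinj j1 (Finset.mem_filter.1 h1).1 j2 (Finset.mem_filter.1 h2).1 h
      rw [this, hset f hf, Finset.sum_image hinj2]
      rw [Finset.mul_sum]
      apply Finset.sum_congr rfl
      intro j hj
      obtain ⟨hjr, hjne⟩ := Finset.mem_filter.1 hj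
      obtain ⟨hv, _⟩ := hf3 _ hjne
      rw [hv, hcval]
      have := h2k j (Finset.mem_range.1 hjr)
      omega
    have hi : ∀ f ∈ FirstRowShaded (M + 2) n, i f ∈ (Finset.range k).powersetCard n := by
      intro f hf
      obtain ⟨⟨hf1, hf2⟩, hf3⟩ := (hmem f).1 hf
      rw [Finset.mem_powersetCard]
      refine ⟨Finset.filter_subset _ _, ?_⟩
      have := hset f hf
      have hinj2 : ∀ j1 ∈ i f, ∀ j2 ∈ i f, col j1 = col j2 → j1 = j2 := by
        intro j1 h1 j2 h2 h
        exact hcolinj j1 (Finset.mem_filter.1 h1).1 j2 (Finset.mem_filter.1 h2).1 h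
      rw [this, Finset.card_image_of_injOn hinj2] at hf2
      exact hf2
    -- nonzero values of jm S
    have hjmval : ∀ S, ∀ c : Fin (M + 2 - 1),
        ((M - (c : ℕ)) % 2 = 0 ∧ (M - (c : ℕ)) / 2 ∈ S → (jm S c : ℕ) = M + 1 - (c : ℕ)) ∧
        (¬((M - (c : ℕ)) % 2 = 0 ∧ (M - (c : ℕ)) / 2 ∈ S) → (jm S c : ℕ) = 0) := by
      intro S c
      constructor
      · intro h; simp only [hjmdef, if_pos h]
      · intro h; simp only [hjmdef, if_neg h]; rfl
    have hjmne : ∀ S, ∀ c : Fin (M + 2 - 1),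
        (jm S c : ℕ) ≠ 0 ↔ ((M - (c : ℕ)) % 2 = 0 ∧ (M - (c : ℕ)) / 2 ∈ S) := by
      intro S c
      constructor
      · intro h
        by_contra hcontra
        exact h ((hjmval S c).2 hcontra)
      · intro h
        rw [(hjmval S c).1 h]
        have := hcle c
        omega
    have hjset : ∀ S ∈ (Finset.range k).powersetCard n,
        (Finset.univ.filter fun c => (jm S c : ℕ) ≠ 0) = S.image col := by
      intro S hS
      obtain ⟨hSsub, hScard⟩ := Finset.mem_powersetCard.1 hS
      ext c
      simp only [Finset.mem_filter, Finset.mem_univ, true_and, Finset.mem_image, hjmne]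
      constructor
      · rintro ⟨hpar, hmem'⟩
        refine ⟨(M - (c : ℕ)) / 2, hmem', ?_⟩
        apply Fin.ext
        simp only [hcval]
        have := hcle c
        omega
      · rintro ⟨j, hj, rfl⟩
        have hjk := Finset.mem_range.1 (hSsub hj)
        have h2 := h2k j hjk
        simp only [hcval]
        have e1 : M - (M - 2 * j) = 2 * j := by omega
        rw [e1]
        constructor
        · omega
        · have : 2 * j / 2 = j := by omega
          rw [this]; exact hj
    have hj : ∀ S ∈ (Finset.range k).powersetCard n, jm S ∈ FirstRowShaded (M + 2) n := by
      intro S hS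
      obtain ⟨hSsub, hScard⟩ := Finset.mem_powersetCard.1 hS
      rw [hmem]
      refine ⟨⟨?_, ?_⟩, ?_⟩
      · intro c
        by_cases h : (M - (c : ℕ)) % 2 = 0 ∧ (M - (c : ℕ)) / 2 ∈ S
        · rw [(hjmval S c).1 h]; omega
        · rw [(hjmval S c).2 h]; omega
      · have hinj2 : ∀ j1 ∈ S, ∀ j2 ∈ S, col j1 = col j2 → j1 = j2 := by
          intro j1 h1 j2 h2 h
          exact hcolinj j1 (hSsub h1) j2 (hSsub h2) h
        rw [hjset S hS, Finset.card_image_of_injOn hinj2]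
        exact hScard
      · intro c hc
        rw [hjmne] at hc
        have hpar := hc.1
        rw [(hjmval S c).1 hc]
        have := hcle c
        constructor
        · omega
        · rw [Nat.even_iff]
          omega
    have hleft : ∀ f ∈ FirstRowShaded (M + 2) n, jm (i f) = f := by
      intro f hf
      obtain ⟨⟨hf1, hf2⟩, hf3⟩ := (hmem f).1 hf
      funext c
      by_cases hc : (f c : ℕ) = 0
      · have hcond : ¬((M - (c : ℕ)) % 2 = 0 ∧ (M - (c : ℕ)) / 2 ∈ i f) := by
          rintro ⟨hpar, hmem'⟩
          simp only [hidef, Finset.mem_filter, Finset.mem_range] at hmem'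
          obtain ⟨_, hne⟩ := hmem'
          have hcj : col ((M - (c : ℕ)) / 2) = c := by
            apply Fin.ext
            simp only [hcval]
            have := hcle c
            omega
          rw [hcj] at hne
          exact hne hc
        apply Fin.ext
        rw [(hjmval (i f) c).2 hcond, hc]
      · obtain ⟨hv, he⟩ := hf3 c hc
        have hpar : (M - (c : ℕ)) % 2 = 0 := by
          rw [Nat.even_iff] at he
          have := hcle c
          omega
        have hcj : col ((M - (c : ℕ)) / 2) = c := by
          apply Fin.ext
          simp only [hcval]
          have := hcle c
          omega
        have hcond : (M - (c : ℕ)) % 2 = 0 ∧ (M - (c : ℕ)) / 2 ∈ i f := by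
          refine ⟨hpar, ?_⟩
          simp only [hidef, Finset.mem_filter, Finset.mem_range]
          refine ⟨by have := hcle c; omega, by rw [hcj]; exact hc⟩
        apply Fin.ext
        rw [(hjmval (i f) c).1 hcond, hv]
        have := hcle c
        omega
    have hright : ∀ S ∈ (Finset.range k).powersetCard n, i (jm S) = S := by
      intro S hS
      obtain ⟨hSsub, hScard⟩ := Finset.mem_powersetCard.1 hS
      ext j
      simp only [hidef, Finset.mem_filter, Finset.mem_range, hjmne]
      constructor
      · rintro ⟨hjk, hpar, hmem'⟩
        have h2 := h2k j hjk
        have e1 : M - (M - 2 * j) = 2 * j := by omega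
        rw [e1] at hmem'
        have : 2 * j / 2 = j := by omega
        rwa [this] at hmem'
      · intro hjS
        have hjk := Finset.mem_range.1 (hSsub hjS)
        have h2 := h2k j hjk
        refine ⟨hjk, ?_⟩
        have e1 : M - (M - 2 * j) = 2 * j := by omega
        rw [e1]
        refine ⟨by omega, ?_⟩
        have : 2 * j / 2 = j := by omega
        rw [this]; exact hjS
    rw [← sum_powersetCard k n]
    exact Finset.sum_nbij' i jm hi hj hleft hright
      (fun f hf => by rw [hweight f hf])
end
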